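/- arXiv:1208.6309 — 13 statements merged into one kernel-verified Lean document; each statement's English description precedes it below -/
import Mathlib

section
/- Let P be a poset that is the union of two closed subposets Q and R such that Q ∩ R is full both in Q and in R. If Q and R (with their induced orders) are conditionally complete, then P is conditionally complete. -/
/-- A poset is conditionally complete if every nonempty subset possessing an upper bound
has a least upper bound. -/
def CondComplete (P : Type*) [PartialOrder P] : Prop :=
  ∀ S : Set P, S.Nonempty → (∃ b : P, ∀ s ∈ S, s ≤ b) →
    ∃ l : P, (∀ s ∈ S, s ≤ l) ∧ ∀ b : P, (∀ s ∈ S, s ≤ b) → l ≤ b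

/-- The subposet `A` is full in the subposet `B`: for every `p ∈ B` the set
`⌊p⌋ ∩ A` is empty or has a greatest element. -/
def IsFullIn {P : Type*} [PartialOrder P] (A B : Set P) : Prop :=
  ∀ p ∈ B, {x | x ∈ A ∧ x ≤ p} = ∅ ∨
    ∃ g ∈ A, g ≤ p ∧ ∀ x ∈ A, x ≤ p → x ≤ g

/-- The subposet `A` (with the induced order) is conditionally complete. -/
def CondCompleteOn {P : Type*} [PartialOrder P] (A : Set P) : Prop :=
  ∀ S : Set P, S ⊆ A → S.Nonempty → (∃ b ∈ A, ∀ s ∈ S, s ≤ b) →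
    ∃ l ∈ A, (∀ s ∈ S, s ≤ l) ∧ ∀ b ∈ A, (∀ s ∈ S, s ≤ b) → l ≤ b


theorem ccp_aux {P : Type*} [PartialOrder P] (Q R : Set P)
    (hunion : Q ∪ R = Set.univ)
    (hQclosed : ∀ q ∈ Q, ∀ x : P, x ≤ q → x ∈ Q)
    (hRclosed : ∀ r ∈ R, ∀ x : P, x ≤ r → x ∈ R)
    (hRfull : IsFullIn (Q ∩ R) R)
    (hQcc : CondCompleteOn Q)
    (S : Set P) (hS : S.Nonempty) (b : P) (hb : b ∈ Q) (hub : ∀ s ∈ S, s ≤ b) :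
    ∃ l : P, (∀ s ∈ S, s ≤ l) ∧ ∀ b : P, (∀ s ∈ S, s ≤ b) → l ≤ b := by
  have hSQ : S ⊆ Q := fun s hs => hQclosed b hb s (hub s hs)
  obtain ⟨l, hlQ, hlub, hlmin⟩ := hQcc S hSQ hS ⟨b, hb, hub⟩
  refine ⟨l, hlub, fun b' hb' => ?_⟩
  have hb'mem : b' ∈ Q ∪ R := hunion ▸ Set.mem_univ b'
  rcases hb'mem with h | h
  · exact hlmin b' h hb'
  · rcases hRfull b' h with he | ⟨g, hgQR, hgb', hgmax⟩
    · obtain ⟨s₀, hs₀⟩ := hS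
      have : s₀ ∈ {x | x ∈ Q ∩ R ∧ x ≤ b'} :=
        ⟨⟨hSQ hs₀, hRclosed b' h s₀ (hb' s₀ hs₀)⟩, hb' s₀ hs₀⟩
      exact (Set.eq_empty_iff_forall_notMem.mp he s₀ this).elim
    · have : ∀ s ∈ S, s ≤ g := fun s hs =>
        hgmax s ⟨hSQ hs, hRclosed b' h s (hb' s hs)⟩ (hb' s hs)
      exact (hlmin g hgQR.1 this).trans hgb'

/-- If `P = Q ∪ R` with `Q`, `R` closed subposets such that `Q ∩ R` is full in
`Q` and in `R`, and `Q` and `R` are conditionally complete, then so is `P`. -/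
theorem ccp_amalgam {P : Type*} [PartialOrder P] (Q R : Set P)
    (hunion : Q ∪ R = Set.univ)
    (hQclosed : ∀ q ∈ Q, ∀ x : P, x ≤ q → x ∈ Q)
    (hRclosed : ∀ r ∈ R, ∀ x : P, x ≤ r → x ∈ R)
    (hQfull : IsFullIn (Q ∩ R) Q) (hRfull : IsFullIn (Q ∩ R) R)
    (hQcc : CondCompleteOn Q) (hRcc : CondCompleteOn R) :
    CondComplete P := by
  intro S hS ⟨b, hub⟩
  have hbmem : b ∈ Q ∪ R := hunion ▸ Set.mem_univ b
  rcases hbmem with hb | hb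
  · exact ccp_aux Q R hunion hQclosed hRclosed hRfull hQcc S hS b hb hub
  · have h1 : R ∪ Q = Set.univ := by rw [Set.union_comm]; exact hunion
    have h2 : IsFullIn (R ∩ Q) Q := by rwa [Set.inter_comm]
    exact ccp_aux R Q h1 hRclosed hQclosed h2 hRcc S hS b hb hub
end

section
/- A poset is simplicial if and only if it is order-isomorphic to a subcomplex of a combinatorial simplex, i.e., to a closed subposet of Δ^S for some set S. -/
universe u

/-- The combinatorial simplex `Δ^S`: the poset of nonempty subsets of `S`,
ordered by inclusion. -/
abbrev SimplexPoset (S : Type u) : Type u := {T : Set S // T.Nonempty}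

/-- A poset is simplicial if it is conditionally complete and every cone `⌊p⌋` is
order-isomorphic to a combinatorial simplex. -/
def IsSimplicialPoset (K : Type u) [PartialOrder K] : Prop :=
  CondComplete K ∧
    ∀ p : K, ∃ T : Type u, Nonempty ({x : K // x ≤ p} ≃o SimplexPoset T)

section Aux

variable {S : Type u}

lemma simplex_le_iff (A B : SimplexPoset S) : A ≤ B ↔ A.val ⊆ B.val := Iff.rfl

lemma simplex_isMin_iff (A : SimplexPoset S) : IsMin A ↔ ∃ t, A.val = {t} := by
  constructor
  · intro h
    obtain ⟨t, ht⟩ := A.2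
    have hle : (⟨{t}, Set.singleton_nonempty t⟩ : SimplexPoset S) ≤ A :=
      Set.singleton_subset_iff.2 ht
    have h2 : A.val ⊆ {t} := h hle
    exact ⟨t, Set.Subset.antisymm h2 (Set.singleton_subset_iff.2 ht)⟩
  · rintro ⟨t, ht⟩ B hB
    obtain ⟨s, hs⟩ := B.2
    have hst : s = t := by
      have := hB hs; rw [ht] at this; exact this
    intro x hx
    rw [ht] at hx
    rcases hx with rfl
    exact hst ▸ hs

variable {K : Type u} [PartialOrder K]

lemma isMin_cone_iff {p : K} {x : {x : K // x ≤ p}} :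
    IsMin x ↔ IsMin x.1 := by
  constructor
  · intro hm z hz
    exact hm (b := ⟨z, hz.trans x.2⟩) hz
  · intro hm z hz
    exact hm hz

lemma exists_min_le (hK : IsSimplicialPoset K) (p : K) :
    ∃ v : K, IsMin v ∧ v ≤ p := by
  obtain ⟨T, ⟨e⟩⟩ := hK.2 p
  obtain ⟨t, _⟩ := (e ⟨p, le_refl p⟩).2
  set x := e.symm ⟨{t}, Set.singleton_nonempty t⟩ with hx
  have hmin : IsMin x := by
    rw [hx, e.symm.isMin_apply]
    exact (simplex_isMin_iff _).2 ⟨t, rfl⟩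
  refine ⟨x.val, ?_, x.2⟩
  exact isMin_cone_iff.1 hmin

/-- If every minimal element below `p` is below `q`, then `p ≤ q`. -/
lemma le_of_min_le (hK : IsSimplicialPoset K) (p q : K)
    (h : ∀ v : K, IsMin v → v ≤ p → v ≤ q) : p ≤ q := by
  obtain ⟨T, ⟨e⟩⟩ := hK.2 p
  set V : Set K := {v | IsMin v ∧ v ≤ p} with hV
  have hne : V.Nonempty := exists_min_le hK p
  obtain ⟨l, hub, hlub⟩ := hK.1 V hne ⟨p, fun v hv => hv.2⟩
  have hlp : l ≤ p := hlub p (fun v hv => hv.2)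
  have hpl : p ≤ l := by
    have key : ∀ t : T, t ∈ (e ⟨l, hlp⟩).val := by
      intro t
      set x := e.symm ⟨{t}, Set.singleton_nonempty t⟩ with hxdef
      have hmx : IsMin x := by
        rw [hxdef, e.symm.isMin_apply]
        exact (simplex_isMin_iff _).2 ⟨t, rfl⟩
      have hxV : x.val ∈ V := ⟨isMin_cone_iff.1 hmx, x.2⟩
      have hxl : x ≤ ⟨l, hlp⟩ := hub x.val hxV
      have h2 : (⟨{t}, Set.singleton_nonempty t⟩ : SimplexPoset T) ≤ e ⟨l, hlp⟩ := by
        have := e.monotone hxl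
        rwa [hxdef, OrderIso.apply_symm_apply] at this
      exact h2 rfl
    have hsub : e ⟨p, le_refl p⟩ ≤ e ⟨l, hlp⟩ := fun t _ => key t
    exact e.le_iff_le.1 hsub
  exact hpl.trans (hlub q (fun v hv => h v hv.1 hv.2))

end Aux

section Forward

variable {K : Type u} [PartialOrder K]

/-- The vertex map of a simplicial poset. -/
noncomputable def vtxMap (hK : IsSimplicialPoset K) (p : K) :
    SimplexPoset {v : K // IsMin v} :=
  ⟨{v | v.val ≤ p}, by
    obtain ⟨v, hv, hvp⟩ := exists_min_le hK p
    exact ⟨⟨v, hv⟩, hvp⟩⟩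

lemma vtxMap_le_iff (hK : IsSimplicialPoset K) {p q : K} :
    vtxMap hK p ≤ vtxMap hK q ↔ p ≤ q := by
  constructor
  · intro h
    exact le_of_min_le hK p q fun v hv hvp => h (show (⟨v, hv⟩ : {v : K // IsMin v}) ∈ _ from hvp)
  · intro h v hv
    exact le_trans hv h

lemma vtxMap_injective (hK : IsSimplicialPoset K) : Function.Injective (vtxMap hK) :=
  fun p q h =>
    le_antisymm ((vtxMap_le_iff hK).1 h.le) ((vtxMap_le_iff hK).1 h.ge)

/-- The range of the vertex map is closed under passing to nonempty subsets. -/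
lemma vtxMap_range_closed (hK : IsSimplicialPoset K)
    {p : K} (y : SimplexPoset {v : K // IsMin v}) (hy : y ≤ vtxMap hK p) :
    ∃ q : K, vtxMap hK q = y := by
  classical
  -- W : underlying set of elements of K
  set W : Set K := Subtype.val '' y.val with hW
  have hWne : W.Nonempty := y.2.image _
  have hWub : ∀ w ∈ W, w ≤ p := by
    rintro _ ⟨v, hv, rfl⟩
    exact hy hv
  obtain ⟨q, hub, hlub⟩ := hK.1 W hWne ⟨p, hWub⟩
  have hqp : q ≤ p := hlub p hWub
  refine ⟨q, ?_⟩
  apply Subtype.ext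
  apply Set.eq_of_subset_of_subset
  · -- every minimal element ≤ q belongs to y
    rintro ⟨w, hwmin⟩ (hwq : w ≤ q)
    obtain ⟨T, ⟨e⟩⟩ := hK.2 p
    obtain ⟨v₀, hv₀⟩ := y.2
    set U : Set T := ⋃ (z : {x : K // x ≤ p}) (_ : z.1 ∈ W), (e z).val with hU
    have hUne : U.Nonempty := by
      obtain ⟨t, ht⟩ := (e ⟨v₀.val, hy hv₀⟩).2
      exact ⟨t, Set.mem_biUnion
        (show ((⟨v₀.val, hy hv₀⟩ : {x : K // x ≤ p})).1 ∈ W from ⟨v₀, hv₀, rfl⟩) ht⟩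
    set u := e.symm ⟨U, hUne⟩ with hu
    -- u.val is an upper bound of W, hence q ≤ u.val
    have huub : ∀ w' ∈ W, w' ≤ u.val := by
      rintro _ ⟨v, hv, rfl⟩
      have h1 : (e ⟨v.val, hy hv⟩) ≤ ⟨U, hUne⟩ := by
        intro t ht
        exact Set.mem_biUnion
          (show ((⟨v.val, hy hv⟩ : {x : K // x ≤ p})).1 ∈ W from ⟨v, hv, rfl⟩) ht
      have h2 : (⟨v.val, hy hv⟩ : {x : K // x ≤ p}) ≤ u := by
        rw [hu, ← e.symm_apply_apply ⟨v.val, hy hv⟩]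
        exact e.symm.monotone h1
      exact h2
    have hqu : q ≤ u.val := hlub u.val huub
    -- so e ⟨q⟩ ⊆ U
    have hqp' : q ≤ p := hqp
    have hsub : (e ⟨q, hqp'⟩).val ⊆ U := by
      have h1 : (⟨q, hqp'⟩ : {x : K // x ≤ p}) ≤ u := hqu
      have h2 := e.monotone h1
      rw [hu, OrderIso.apply_symm_apply] at h2
      exact h2
    -- e ⟨w⟩ is a min, a singleton {t}
    have hwp : w ≤ p := hwq.trans hqp
    have hwmin' : IsMin (e ⟨w, hwp⟩) := by
      rw [e.isMin_apply]
      exact isMin_cone_iff.2 hwmin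
    obtain ⟨t, ht⟩ := (simplex_isMin_iff _).1 hwmin'
    have htq : t ∈ (e ⟨q, hqp'⟩).val := by
      have : (e ⟨w, hwp⟩) ≤ e ⟨q, hqp'⟩ := e.monotone hwq
      exact this (by rw [ht]; rfl)
    have htU : t ∈ U := hsub htq
    rw [hU] at htU
    obtain ⟨z, hzW, ht2⟩ := Set.mem_iUnion₂.1 htU
    obtain ⟨v, hv, hvz⟩ := hzW
    -- e z is a min, a singleton containing t, hence = {t}
    have hzmin : IsMin (e z) := by
      rw [e.isMin_apply]
      exact isMin_cone_iff.2 (hvz ▸ v.2)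
    obtain ⟨t', ht'⟩ := (simplex_isMin_iff _).1 hzmin
    have htt' : t = t' := by rw [ht'] at ht2; exact ht2
    have heq : e ⟨w, hwp⟩ = e z := by
      apply Subtype.ext
      rw [ht, ht', htt']
    have hwz : w = z.1 := congrArg Subtype.val (e.injective heq)
    have : (⟨w, hwmin⟩ : {v : K // IsMin v}) = v := Subtype.ext (hwz.trans hvz.symm)
    rw [this]
    exact hv
  · intro v hv
    exact hub v.val ⟨v, hv, rfl⟩

end Forward

section Backward

variable {S : Type u} {K : Type u} [PartialOrder K]

lemma condComplete_closed (C : Set (SimplexPoset S))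
    (hC : ∀ x ∈ C, ∀ y : SimplexPoset S, y ≤ x → y ∈ C) :
    CondComplete ↥C := by
  rintro D hD ⟨b, hb⟩
  set U : Set S := ⋃ (d : ↥C) (_ : d ∈ D), d.1.1 with hU
  obtain ⟨d₀, hd₀⟩ := hD
  obtain ⟨s, hs⟩ := d₀.1.2
  have hUne : U.Nonempty := ⟨s, Set.mem_biUnion hd₀ hs⟩
  have hUb : U ⊆ b.1.1 := by
    intro x hx
    rw [hU] at hx
    obtain ⟨d, hd, hx2⟩ := Set.mem_iUnion₂.1 hx
    exact hb d hd hx2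
  have hUC : (⟨U, hUne⟩ : SimplexPoset S) ∈ C := hC b.1 b.2 _ hUb
  refine ⟨⟨⟨U, hUne⟩, hUC⟩, ?_, ?_⟩
  · intro d hd
    show d.1.1 ⊆ U
    intro x hx
    exact Set.mem_biUnion hd hx
  · intro b' hb'
    show U ⊆ b'.1.1
    intro x hx
    obtain ⟨d, hd, hx2⟩ := Set.mem_iUnion₂.1 hx
    exact hb' d hd hx2

lemma condComplete_of_iso {P Q : Type*} [PartialOrder P] [PartialOrder Q]
    (e : P ≃o Q) (hQ : CondComplete Q) : CondComplete P := by
  rintro A hA ⟨b, hb⟩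
  obtain ⟨l, h1, h2⟩ := hQ (e '' A) (hA.image e)
    ⟨e b, by rintro _ ⟨a, ha, rfl⟩; exact e.monotone (hb a ha)⟩
  refine ⟨e.symm l, ?_, ?_⟩
  · intro a ha
    exact e.le_symm_apply.2 (h1 (e a) ⟨a, ha, rfl⟩)
  · intro b' hb'
    exact e.symm_apply_le.2 (h2 (e b') (by rintro _ ⟨a, ha, rfl⟩; exact e.monotone (hb' a ha)))

/-- The cone on an element of a closed subposet of a simplex is a simplex. -/
noncomputable def coneIso (C : Set (SimplexPoset S))
    (hC : ∀ x ∈ C, ∀ y : SimplexPoset S, y ≤ x → y ∈ C) (c : ↥C) :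
    {y : ↥C // y ≤ c} ≃o SimplexPoset ↥(c.1.1) := by
  refine
    { toFun := fun y => ⟨{s : ↥(c.1.1) | s.1 ∈ y.1.1.1}, ?_⟩
      invFun := fun B =>
        ⟨⟨⟨Subtype.val '' B.1, B.2.image _⟩,
          hC c.1 c.2 _ (by rintro _ ⟨s, _, rfl⟩; exact s.2)⟩,
          by rintro _ ⟨s, _, rfl⟩; exact s.2⟩
      left_inv := ?_, right_inv := ?_, map_rel_iff' := ?_ }
  · obtain ⟨t, ht⟩ := y.1.1.2
    exact ⟨⟨t, y.2 ht⟩, ht⟩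
  · intro y
    apply Subtype.ext; apply Subtype.ext; apply Subtype.ext
    show Subtype.val '' {s : ↥(c.1.1) | s.1 ∈ y.1.1.1} = y.1.1.1
    ext x
    constructor
    · rintro ⟨s, hs, rfl⟩; exact hs
    · intro hx; exact ⟨⟨x, y.2 hx⟩, hx, rfl⟩
  · intro B
    apply Subtype.ext
    show {s : ↥(c.1.1) | s.1 ∈ Subtype.val '' B.1} = B.1
    ext s
    simp [Subtype.val_injective.mem_set_image]
  · intro y y'
    constructor
    · intro h
      show y.1.1.1 ⊆ y'.1.1.1
      intro x hx
      exact h (show (⟨x, y.2 hx⟩ : ↥(c.1.1)) ∈ _ from hx)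
    · intro h s hs
      exact h hs

end Backward

/-- A poset is simplicial iff it is order-isomorphic to a subcomplex of a simplex,
i.e. to a closed subposet of `Δ^S` for some set `S`. -/
theorem simplicial_iff_subcomplex_of_simplex (K : Type u) [PartialOrder K] :
    IsSimplicialPoset K ↔
      ∃ (S : Type u) (C : Set (SimplexPoset S)),
        (∀ x ∈ C, ∀ y : SimplexPoset S, y ≤ x → y ∈ C) ∧ Nonempty (K ≃o ↥C) := by
  constructor
  · intro hK
    refine ⟨{v : K // IsMin v}, Set.range (vtxMap hK), ?_, ?_⟩
    · rintro _ ⟨p, rfl⟩ y hy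
      obtain ⟨q, hq⟩ := vtxMap_range_closed hK y hy
      exact ⟨q, hq⟩
    · refine ⟨{ toEquiv := Equiv.ofInjective _ (vtxMap_injective hK), map_rel_iff' := ?_ }⟩
      intro p q
      show vtxMap hK p ≤ vtxMap hK q ↔ p ≤ q
      exact vtxMap_le_iff hK
  · rintro ⟨S, C, hC, ⟨e⟩⟩
    constructor
    · exact condComplete_of_iso e (condComplete_closed C hC)
    · intro p
      refine ⟨↥((e p).1.1), ⟨?_⟩⟩
      refine OrderIso.trans ?_ (coneIso C hC (e p))
      exact
        { toFun := fun x => ⟨e x.1, e.monotone x.2⟩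
          invFun := fun y => ⟨e.symm y.1, by
            have := e.symm.monotone y.2
            rwa [e.symm_apply_apply] at this⟩
          left_inv := fun x => Subtype.ext (e.symm_apply_apply x.1)
          right_inv := fun y => Subtype.ext (e.apply_symm_apply y.1)
          map_rel_iff' := fun {x y} => by
            constructor
            · intro h; exact e.le_iff_le.1 h
            · intro h; exact e.monotone h }
end

section
/- Simplicial maps are full: if f : K → L is a simplicial map (i.e., a closed monotone map) between simplicial complexes, then for every σ ∈ L the fiber f⁻¹(σ) is a full subposet of K. -/
universe u

/-- A simplicial complex: a countable conditionally complete poset in which every cone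
is finite and order-isomorphic to `Δ^T` for a finite set `T`. -/
def IsSimplicialComplexPoset (K : Type u) [PartialOrder K] : Prop :=
  Countable K ∧ CondComplete K ∧
    ∀ p : K, {x : K | x ≤ p}.Finite ∧
      ∃ T : Type u, Finite T ∧ Nonempty ({x : K // x ≤ p} ≃o SimplexPoset T)

/-- A subposet `Q` of `P` is full if for every `p ∈ P` the set `⌊p⌋ ∩ Q` is
empty or has a greatest element. -/
def IsFullSub {P : Type*} [PartialOrder P] (Q : Set P) : Prop :=
  ∀ p : P, {x | x ∈ Q ∧ x ≤ p} = ∅ ∨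
    ∃ g ∈ Q, g ≤ p ∧ ∀ x ∈ Q, x ≤ p → x ≤ g

/-- Simplicial maps are full: if `f : K → L` is a closed monotone map between
simplicial complexes, then every fiber `f⁻¹(σ)` is a full subposet of `K`. -/
theorem simplicial_maps_are_full {K L : Type u} [PartialOrder K] [PartialOrder L]
    (hK : IsSimplicialComplexPoset K) (hL : IsSimplicialComplexPoset L)
    (f : K → L) (hmono : Monotone f)
    (hclosed : ∀ p : K, ∀ q : L, q ≤ f p → ∃ p' : K, p' ≤ p ∧ f p' = q) :
    ∀ σ : L, IsFullSub (f ⁻¹' {σ}) := by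
  intro σ p
  by_cases hne : {x | x ∈ f ⁻¹' {σ} ∧ x ≤ p} = ∅
  · exact Or.inl hne
  right
  obtain ⟨x0, hx0⟩ : ∃ x, x ∈ {x | x ∈ f ⁻¹' {σ} ∧ x ≤ p} :=
    Set.nonempty_iff_ne_empty.2 hne
  have hx0σ : f x0 = σ := hx0.1
  have hx0p : x0 ≤ p := hx0.2
  obtain ⟨-, T, -, ⟨e⟩⟩ := hK.2.2 p
  obtain ⟨-, T', -, ⟨e'⟩⟩ := hL.2.2 (f p)
  -- the set of fiber elements below p, as subtype elements
  set Sh : Set {x : K // x ≤ p} := {z | f z.1 = σ} with hSh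
  set U : Set T := ⋃ z ∈ Sh, (e z).1 with hU
  have hUne : U.Nonempty := by
    obtain ⟨s, hs⟩ := (e ⟨x0, hx0p⟩).2
    exact ⟨s, Set.mem_biUnion (show (⟨x0, hx0p⟩ : {x // x ≤ p}) ∈ Sh from hx0σ) hs⟩
  set lh : {x : K // x ≤ p} := e.symm ⟨U, hUne⟩ with hlh
  have hel : e lh = ⟨U, hUne⟩ := e.apply_symm_apply _
  -- lh is an upper bound of the fiber elements below p
  have hub : ∀ x, f x = σ → (hx : x ≤ p) → x ≤ lh.1 := by
    intro x hxσ hx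
    have h1 : (e ⟨x, hx⟩).1 ⊆ U := fun t ht =>
      Set.mem_biUnion (show (⟨x, hx⟩ : {x // x ≤ p}) ∈ Sh from hxσ) ht
    have h2 : e ⟨x, hx⟩ ≤ e lh := by rw [hel]; exact h1
    exact e.le_iff_le.1 h2
  have hx0l : x0 ≤ lh.1 := hub x0 hx0σ hx0p
  have hσfl : σ ≤ f lh.1 := hx0σ ▸ hmono hx0l
  have hflp : f lh.1 ≤ f p := hmono lh.2
  have hσp : σ ≤ f p := le_trans hσfl hflp
  -- now show f l = σ using the simplex structure of the cone of f p
  have hkey : f lh.1 = σ := by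
    have hAB : (e' ⟨σ, hσp⟩).1 ⊆ (e' ⟨f lh.1, hflp⟩).1 :=
      e'.le_iff_le.2 (show (⟨σ, hσp⟩ : {q // q ≤ f p}) ≤ ⟨f lh.1, hflp⟩ from hσfl)
    have hBA : (e' ⟨f lh.1, hflp⟩).1 ⊆ (e' ⟨σ, hσp⟩).1 := by
      intro t ht
      set w : {q : L // q ≤ f p} := e'.symm ⟨{t}, Set.singleton_nonempty t⟩ with hw
      have hew : e' w = ⟨{t}, Set.singleton_nonempty t⟩ := e'.apply_symm_apply _
      have hwl : w.1 ≤ f lh.1 := by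
        have : e' w ≤ e' ⟨f lh.1, hflp⟩ := by
          rw [hew]; exact Set.singleton_subset_iff.2 ht
        exact e'.le_iff_le.1 this
      obtain ⟨y, hyl, hyw⟩ := hclosed lh.1 w.1 hwl
      have hyp : y ≤ p := le_trans hyl lh.2
      obtain ⟨s, hs⟩ := (e ⟨y, hyp⟩).2
      have hYU : (e ⟨y, hyp⟩).1 ⊆ U := by
        have : e ⟨y, hyp⟩ ≤ e lh := e.le_iff_le.2 hyl
        rw [hel] at this; exact this
      obtain ⟨z, hz, hsz⟩ : ∃ z ∈ Sh, s ∈ (e z).1 := by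
        simpa [hU, Set.mem_iUnion] using hYU hs
      set vh : {x : K // x ≤ p} := e.symm ⟨{s}, Set.singleton_nonempty s⟩ with hv
      have hev : e vh = ⟨{s}, Set.singleton_nonempty s⟩ := e.apply_symm_apply _
      have hvy : vh.1 ≤ y := by
        have : e vh ≤ e ⟨y, hyp⟩ := by rw [hev]; exact Set.singleton_subset_iff.2 hs
        exact e.le_iff_le.1 this
      have hvz : vh.1 ≤ z.1 := by
        have : e vh ≤ e z := by rw [hev]; exact Set.singleton_subset_iff.2 hsz
        exact e.le_iff_le.1 this
      have hfvw : f vh.1 ≤ w.1 := hyw ▸ hmono hvy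
      have hfvσ : f vh.1 ≤ σ := hz ▸ hmono hvz
      have hfvp : f vh.1 ≤ f p := le_trans hfvσ hσp
      -- f vh corresponds to a nonempty subset of {t}, hence equals w
      have hsub : (e' ⟨f vh.1, hfvp⟩).1 ⊆ {t} := by
        have : e' ⟨f vh.1, hfvp⟩ ≤ e' w :=
          e'.le_iff_le.2 (show (⟨f vh.1, hfvp⟩ : {q // q ≤ f p}) ≤ w from hfvw)
        rw [hew] at this; exact this
      have heq : (e' ⟨f vh.1, hfvp⟩).1 = {t} :=
        Set.Nonempty.subset_singleton_iff (e' ⟨f vh.1, hfvp⟩).2 |>.1 hsub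
      have hfveqw : f vh.1 = w.1 := by
        have : e' ⟨f vh.1, hfvp⟩ = e' w := by rw [hew]; exact Subtype.ext heq
        have := e'.injective this
        exact congrArg Subtype.val this
      have hwσ : w.1 ≤ σ := hfveqw ▸ hfvσ
      have : e' w ≤ e' ⟨σ, hσp⟩ := e'.le_iff_le.2 (show w ≤ ⟨σ, hσp⟩ from hwσ)
      rw [hew] at this
      exact Set.singleton_subset_iff.1 this
    have : e' ⟨f lh.1, hflp⟩ = e' ⟨σ, hσp⟩ := Subtype.ext (Set.Subset.antisymm hBA hAB)
    have := e'.injective this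
    exact congrArg Subtype.val this
  exact ⟨lh.1, hkey, lh.2, fun x hx hxp => hub x hx hxp⟩
end

section
/- Let f : P → Q be a monotone map of posets. On the disjoint union Q ⊔ P define a reflexive relation ≼ by: for q, q′ ∈ Q, q ≼ q′ iff q ≤ q′ in Q; for p, p′ ∈ P, p ≼ p′ iff p ≤ p′ in P; for q ∈ Q and p ∈ P, q ≼ p iff there exists p′ ≤ p in P with f(p′) = q, and never p ≼ q. Then ≼ is transitive (hence a partial order, making Q ⊔ P the mapping cylinder MC(f)) if and only if f is closed. Dually, the reflexive relation on P ⊔ Q agreeing with the given orders on P and on Q and with p ≼ q (p ∈ P, q ∈ Q) iff there exists p′ ≥ p in P with f(p′) = q (and never q ≼ p) is transitive if and only if f is open. -/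
/-- A monotone map of posets is closed if `f(⌊p⌋) = ⌊f(p)⌋` for all `p`. -/
def IsClosedPosetMap {P Q : Type*} [PartialOrder P] [PartialOrder Q] (f : P → Q) : Prop :=
  ∀ p : P, ∀ q : Q, q ≤ f p → ∃ p' : P, p' ≤ p ∧ f p' = q

/-- A monotone map of posets is open if `f(⌈p⌉) = ⌈f(p)⌉` for all `p`. -/
def IsOpenPosetMap {P Q : Type*} [PartialOrder P] [PartialOrder Q] (f : P → Q) : Prop :=
  ∀ p : P, ∀ q : Q, f p ≤ q → ∃ p' : P, p ≤ p' ∧ f p' = q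

/-- The mapping cylinder relation on `Q ⊔ P` for `f : P → Q`. -/
def mcRel {P Q : Type*} [PartialOrder P] [PartialOrder Q] (f : P → Q) :
    Q ⊕ P → Q ⊕ P → Prop
  | Sum.inl q, Sum.inl q' => q ≤ q'
  | Sum.inr p, Sum.inr p' => p ≤ p'
  | Sum.inl q, Sum.inr p => ∃ p' : P, p' ≤ p ∧ f p' = q
  | Sum.inr _, Sum.inl _ => False

/-- The dual mapping cylinder relation on `P ⊔ Q` for `f : P → Q`. -/
def mcDualRel {P Q : Type*} [PartialOrder P] [PartialOrder Q] (f : P → Q) :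
    P ⊕ Q → P ⊕ Q → Prop
  | Sum.inl p, Sum.inl p' => p ≤ p'
  | Sum.inr q, Sum.inr q' => q ≤ q'
  | Sum.inl p, Sum.inr q => ∃ p' : P, p ≤ p' ∧ f p' = q
  | Sum.inr _, Sum.inl _ => False

/-- The mapping cylinder relation is transitive iff `f` is closed; dually,
the dual mapping cylinder relation is transitive iff `f` is open. -/
theorem mappingCylinder_poset_iff {P Q : Type*} [PartialOrder P] [PartialOrder Q]
    (f : P → Q) (hf : Monotone f) :
    (Transitive (mcRel f) ↔ IsClosedPosetMap f) ∧
    (Transitive (mcDualRel f) ↔ IsOpenPosetMap f) := by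
  constructor
  · constructor
    · intro ht p q hq
      exact @ht (Sum.inl q) (Sum.inl (f p)) (Sum.inr p) hq ⟨p, le_refl p, rfl⟩
    · intro hc a b c hab hbc
      match a, b, c with
      | Sum.inl q, Sum.inl q', Sum.inl q'' => exact le_trans hab hbc
      | Sum.inl q, Sum.inl q', Sum.inr p =>
        obtain ⟨p', hp', rfl⟩ := hbc
        obtain ⟨p'', hp'', rfl⟩ := hc p' q hab
        exact ⟨p'', le_trans hp'' hp', rfl⟩
      | Sum.inl q, Sum.inr p, Sum.inr p' =>
        obtain ⟨p'', hp'', rfl⟩ := hab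
        exact ⟨p'', le_trans hp'' hbc, rfl⟩
      | Sum.inr p, Sum.inr p', Sum.inr p'' => exact le_trans hab hbc
  · constructor
    · intro ht p q hq
      exact @ht (Sum.inl p) (Sum.inr (f p)) (Sum.inr q) ⟨p, le_refl p, rfl⟩ hq
    · intro hc a b c hab hbc
      match a, b, c with
      | Sum.inl p, Sum.inl p', Sum.inl p'' => exact le_trans hab hbc
      | Sum.inl p, Sum.inl p', Sum.inr q =>
        obtain ⟨p'', hp'', rfl⟩ := hbc
        exact ⟨p'', le_trans hab hp'', rfl⟩
      | Sum.inl p, Sum.inr q, Sum.inr q' =>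
        obtain ⟨p', hp', rfl⟩ := hab
        obtain ⟨p'', hp'', rfl⟩ := hc p' q' hbc
        exact ⟨p'', le_trans hp' hp'', rfl⟩
      | Sum.inr q, Sum.inr q', Sum.inr q'' => exact le_trans hab hbc
end

section
/- Let f : P → Q and ψ : Q′ → Q be monotone maps of posets, and let P′ = {(p, q′) ∈ P × Q′ : f(p) = ψ(q′)} be the pullback, a subposet of the product P × Q′ (ordered componentwise). If ψ is closed, then the projection φ : P′ → P, (p, q′) ↦ p, is closed. -/
/-- If `ψ` is closed, then the pullback projection `φ : P′ → P` of `f : P → Q`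
along `ψ : Q′ → Q` is closed. -/
theorem pullback_projection_closed {P Q Q' : Type*}
    [PartialOrder P] [PartialOrder Q] [PartialOrder Q']
    (f : P → Q) (ψ : Q' → Q) (hf : Monotone f) (hψ : Monotone ψ)
    (hψclosed : ∀ q' : Q', ∀ q : Q, q ≤ ψ q' → ∃ q'' : Q', q'' ≤ q' ∧ ψ q'' = q) :
    ∀ a : {x : P × Q' // f x.1 = ψ x.2}, ∀ p : P, p ≤ a.val.1 →
      ∃ a' : {x : P × Q' // f x.1 = ψ x.2}, a' ≤ a ∧ a'.val.1 = p := by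
  rintro ⟨⟨p₀, q₀'⟩, h⟩ p hp
  obtain ⟨q'', hle, heq⟩ := hψclosed q₀' (f p) (h ▸ hf hp)
  exact ⟨⟨(p, q''), heq.symm⟩, ⟨hp, hle⟩, rfl⟩
end

section
/- Call a poset P simple if it is conditionally complete and for all σ < τ in P the half-open interval (σ, τ] = {x ∈ P : σ < x ≤ τ} is order-isomorphic to a combinatorial simplex Δ^S for some set S. If P is simple, then its order dual P^op is simple; equivalently, in a simple poset P, for all σ < τ the interval [σ, τ) = {x ∈ P : σ ≤ x < τ} is also order-isomorphic to a combinatorial simplex. -/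
universe u

/-- A poset is simple if it is conditionally complete and every half-open interval
`(σ, τ]` with `σ < τ` is order-isomorphic to a combinatorial simplex. -/
def IsSimplePoset (P : Type u) [PartialOrder P] : Prop :=
  CondComplete P ∧
    ∀ σ τ : P, σ < τ →
      ∃ T : Type u, Nonempty ({x : P // σ < x ∧ x ≤ τ} ≃o SimplexPoset T)

open OrderDual in
lemma simple_poset_dual_aux {P : Type u} [PartialOrder P] {T : Type u} (σ τ : Pᵒᵈ)
    (hlt : σ < τ)
    (e : {x : P // ofDual τ < x ∧ x ≤ ofDual σ} ≃o SimplexPoset T) :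
    Nonempty ({x : Pᵒᵈ // σ < x ∧ x ≤ τ} ≃o SimplexPoset T) := by
  classical
  set τ' := ofDual τ with hτ'
  set σ' := ofDual σ with hσ'
  have hτσ : τ' < σ' := hlt
  set sTop : {x : P // τ' < x ∧ x ≤ σ'} := ⟨σ', hτσ, le_rfl⟩ with hsTop
  have etop : (e sTop).1 = Set.univ := by
    apply Set.eq_univ_of_forall
    intro t
    have h1 : e.symm ⟨{t}, Set.singleton_nonempty t⟩ ≤ sTop :=
      Subtype.coe_le_coe.mp (e.symm ⟨{t}, Set.singleton_nonempty t⟩).2.2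
    have h2 : e (e.symm ⟨{t}, Set.singleton_nonempty t⟩) ≤ e sTop := e.monotone h1
    rw [e.apply_symm_apply] at h2
    exact h2 (Set.mem_singleton t)
  have key : ∀ x, (e x).1 = Set.univ → x = sTop := fun x hx =>
    e.injective (Subtype.ext (hx.trans etop.symm))
  have huniv : (Set.univ : Set T).Nonempty := etop ▸ (e sTop).2
  have hmem : ∀ x : {x : Pᵒᵈ // σ < x ∧ x ≤ τ}, ofDual x.1 ≠ τ' →
      τ' < ofDual x.1 ∧ ofDual x.1 ≤ σ' := fun x hx =>
    ⟨lt_of_le_of_ne x.2.2 (Ne.symm hx), le_of_lt x.2.1⟩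
  have hFne : ∀ (x : {x : Pᵒᵈ // σ < x ∧ x ≤ τ}) (hx : ofDual x.1 ≠ τ'),
      ((e ⟨ofDual x.1, hmem x hx⟩).1)ᶜ.Nonempty := by
    intro x hx
    refine Set.nonempty_compl.mpr fun hu => ?_
    have := congrArg Subtype.val (key _ hu)
    exact (ne_of_lt (show ofDual x.1 < σ' from x.2.1)) this
  let F : {x : Pᵒᵈ // σ < x ∧ x ≤ τ} → SimplexPoset T := fun x =>
    if hx : ofDual x.1 = τ' then ⟨Set.univ, huniv⟩
    else ⟨((e ⟨ofDual x.1, hmem x hx⟩).1)ᶜ, hFne x hx⟩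
  have hGmem : ∀ (A : SimplexPoset T) (hA : A.1 ≠ Set.univ),
      σ < toDual (e.symm ⟨A.1ᶜ, Set.nonempty_compl.mpr hA⟩).1 ∧
      toDual (e.symm ⟨A.1ᶜ, Set.nonempty_compl.mpr hA⟩).1 ≤ τ := by
    intro A hA
    set y := e.symm ⟨A.1ᶜ, Set.nonempty_compl.mpr hA⟩ with hy
    constructor
    · show y.1 < σ'
      refine lt_of_le_of_ne y.2.2 fun hEq => ?_
      have h1 : y = sTop := Subtype.ext hEq
      have h2 : (⟨A.1ᶜ, Set.nonempty_compl.mpr hA⟩ : SimplexPoset T) = e sTop := by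
        rw [← h1, hy, e.apply_symm_apply]
      have h3 : A.1ᶜ = Set.univ := (congrArg Subtype.val h2).trans etop
      have h4 : A.1 = ∅ := by simpa using h3
      exact A.2.ne_empty h4
    · show τ' ≤ y.1
      exact le_of_lt y.2.1
  let G : SimplexPoset T → {x : Pᵒᵈ // σ < x ∧ x ≤ τ} := fun A =>
    if hA : A.1 = Set.univ then ⟨τ, hlt, le_rfl⟩
    else ⟨toDual (e.symm ⟨A.1ᶜ, Set.nonempty_compl.mpr hA⟩).1, hGmem A hA⟩
  refine ⟨⟨⟨F, G, ?_, ?_⟩, ?_⟩⟩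
  · -- left inverse
    intro x
    by_cases hx : ofDual x.1 = τ'
    · have hFx : F x = ⟨Set.univ, huniv⟩ := dif_pos hx
      have : G (F x) = ⟨τ, hlt, le_rfl⟩ := by rw [hFx]; exact dif_pos rfl
      rw [this]
      exact Subtype.ext hx.symm
    · have hFx : F x = ⟨((e ⟨ofDual x.1, hmem x hx⟩).1)ᶜ, hFne x hx⟩ := dif_neg hx
      have hne : (F x).1 ≠ Set.univ := by
        rw [hFx]
        simpa using (e ⟨ofDual x.1, hmem x hx⟩).2.ne_empty
      rw [show G (F x) = ⟨toDual (e.symm ⟨(F x).1ᶜ, Set.nonempty_compl.mpr hne⟩).1,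
            hGmem (F x) hne⟩ from dif_neg hne]
      have harg : (⟨(F x).1ᶜ, Set.nonempty_compl.mpr hne⟩ : SimplexPoset T)
          = e ⟨ofDual x.1, hmem x hx⟩ := by
        apply Subtype.ext
        show ((F x).1)ᶜ = _
        rw [hFx]
        exact compl_compl _
      apply Subtype.ext
      show toDual (e.symm ⟨(F x).1ᶜ, Set.nonempty_compl.mpr hne⟩).1 = x.1
      rw [harg, e.symm_apply_apply]
      rfl
  · -- right inverse
    intro A
    by_cases hA : A.1 = Set.univ
    · have hGA : G A = ⟨τ, hlt, le_rfl⟩ := dif_pos hA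
      rw [hGA, show F ⟨τ, hlt, le_rfl⟩ = ⟨Set.univ, huniv⟩ from dif_pos rfl]
      exact Subtype.ext hA.symm
    · have hGA : G A = ⟨toDual (e.symm ⟨A.1ᶜ, Set.nonempty_compl.mpr hA⟩).1, hGmem A hA⟩ :=
        dif_neg hA
      set y := e.symm ⟨A.1ᶜ, Set.nonempty_compl.mpr hA⟩ with hy
      have hyne : ofDual (G A).1 ≠ τ' := by
        show ofDual (G A).1 ≠ τ'
        rw [hGA]
        exact ne_of_gt y.2.1
      rw [show F (G A) = ⟨((e ⟨ofDual (G A).1, hmem _ hyne⟩).1)ᶜ, hFne _ hyne⟩ from dif_neg hyne]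
      have harg : (⟨ofDual (G A).1, hmem _ hyne⟩ : {x : P // τ' < x ∧ x ≤ σ'}) = y := by
        apply Subtype.ext
        show ofDual (G A).1 = y.1
        rw [hGA]
        rfl
      apply Subtype.ext
      show ((e ⟨ofDual (G A).1, hmem _ hyne⟩).1)ᶜ = A.1
      rw [harg, hy, e.apply_symm_apply]
      exact compl_compl _
  · -- map_rel_iff
    intro a b
    show F a ≤ F b ↔ a ≤ b
    by_cases ha : ofDual a.1 = τ' <;> by_cases hb : ofDual b.1 = τ'
    · rw [show F a = ⟨Set.univ, huniv⟩ from dif_pos ha,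
        show F b = ⟨Set.univ, huniv⟩ from dif_pos hb]
      constructor
      · intro _
        exact Subtype.coe_le_coe.mp (show ofDual b.1 ≤ ofDual a.1 by rw [ha, hb])
      · intro _
        exact le_rfl
    · rw [show F a = ⟨Set.univ, huniv⟩ from dif_pos ha,
        show F b = ⟨((e ⟨ofDual b.1, hmem b hb⟩).1)ᶜ, hFne b hb⟩ from dif_neg hb]
      constructor
      · intro hle
        exfalso
        have h1 : (Set.univ : Set T) ⊆ ((e ⟨ofDual b.1, hmem b hb⟩).1)ᶜ := hle
        have h2 : (e ⟨ofDual b.1, hmem b hb⟩).1 = ∅ := by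
          have := Set.univ_subset_iff.mp h1
          simpa using congrArg compl this
        exact (e ⟨ofDual b.1, hmem b hb⟩).2.ne_empty h2
      · intro hle
        exfalso
        have h1 : ofDual b.1 ≤ ofDual a.1 := hle
        rw [ha] at h1
        exact hb (le_antisymm h1 (show τ' ≤ ofDual b.1 from b.2.2))
    · rw [show F b = ⟨Set.univ, huniv⟩ from dif_pos hb]
      constructor
      · intro _
        exact Subtype.coe_le_coe.mp (show ofDual b.1 ≤ ofDual a.1 by rw [hb]; exact a.2.2)
      · intro _
        exact Set.subset_univ _
    · rw [show F a = ⟨((e ⟨ofDual a.1, hmem a ha⟩).1)ᶜ, hFne a ha⟩ from dif_neg ha,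
        show F b = ⟨((e ⟨ofDual b.1, hmem b hb⟩).1)ᶜ, hFne b hb⟩ from dif_neg hb]
      have h1 : (e ⟨ofDual b.1, hmem b hb⟩ ≤ e ⟨ofDual a.1, hmem a ha⟩)
          ↔ (ofDual b.1 ≤ ofDual a.1) := by
        rw [e.le_iff_le]
        exact Subtype.mk_le_mk
      constructor
      · intro hle
        have h2 : ((e ⟨ofDual a.1, hmem a ha⟩).1)ᶜ ⊆ ((e ⟨ofDual b.1, hmem b hb⟩).1)ᶜ := hle
        have h3 : (e ⟨ofDual b.1, hmem b hb⟩).1 ⊆ (e ⟨ofDual a.1, hmem a ha⟩).1 :=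
          Set.compl_subset_compl.mp h2
        exact Subtype.coe_le_coe.mp (h1.mp h3)
      · intro hle
        have h3 : ofDual b.1 ≤ ofDual a.1 := hle
        have h4 : (e ⟨ofDual b.1, hmem b hb⟩).1 ⊆ (e ⟨ofDual a.1, hmem a ha⟩).1 := h1.mpr h3
        exact Set.compl_subset_compl.mpr h4

/-- If `P` is a simple poset, then its order dual is simple. -/
theorem simple_poset_dual (P : Type u) [PartialOrder P] (h : IsSimplePoset P) :
    IsSimplePoset Pᵒᵈ := by
  obtain ⟨hc, hs⟩ := h
  constructor
  · intro S hS hbd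
    obtain ⟨b, hb⟩ := hbd
    obtain ⟨s₀, hs₀⟩ := hS
    obtain ⟨m, hm1, hm2⟩ := hc {l : P | ∀ s ∈ S, l ≤ OrderDual.ofDual s}
      ⟨OrderDual.ofDual b, fun s hsS => hb s hsS⟩
      ⟨OrderDual.ofDual s₀, fun l hl => hl s₀ hs₀⟩
    exact ⟨OrderDual.toDual m, fun s hsS => hm2 _ (fun l hl => hl s hsS),
      fun b' hb' => hm1 _ (fun s hsS => hb' s hsS)⟩
  · intro σ τ hlt
    obtain ⟨T, ⟨e⟩⟩ := hs (OrderDual.ofDual τ) (OrderDual.ofDual σ) hlt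
    exact ⟨T, simple_poset_dual_aux σ τ hlt e⟩
end

section
/- Let P be a finite poset with P = Q ∪ R, where Q and R are closed subposets of P such that Q ∩ R is of codimension one both in Q and in R, and each of Q, R and Q ∩ R is constructible. Then Q ∩ R is of pure codimension one both in Q and in R. -/
/-- `a` is a maximal element of the subposet `A`. -/
def IsMaxIn {P : Type*} [PartialOrder P] (A : Set P) (a : P) : Prop :=
  a ∈ A ∧ ∀ x ∈ A, a ≤ x → x = a

/-- `b` covers `a` within the subposet `A`: `a < b` and no element of `A` lies
strictly between them. -/
def CoversIn {P : Type*} [PartialOrder P] (A : Set P) (a b : P) : Prop :=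
  a ∈ A ∧ b ∈ A ∧ a < b ∧ ∀ x ∈ A, a < x → ¬x < b

/-- The subposet `A` is of codimension one in the subposet `B`: every maximal element
of `A` is covered (within `B`) by a maximal element of `B`. -/
def CodimOneIn {P : Type*} [PartialOrder P] (A B : Set P) : Prop :=
  ∀ a : P, IsMaxIn A a → ∃ b : P, IsMaxIn B b ∧ CoversIn B a b

/-- The subposet `A` is of pure codimension one in the subposet `B`: it is of
codimension one, and no maximal element of `A` is covered by a non-maximal element
of `B`. -/
def PureCodimOneIn {P : Type*} [PartialOrder P] (A B : Set P) : Prop :=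
  CodimOneIn A B ∧ ∀ a : P, IsMaxIn A a → ∀ b : P, CoversIn B a b → IsMaxIn B b

/-- `A` is a closed subposet of the subposet `B`. -/
def IsClosedSubposet {P : Type*} [PartialOrder P] (B A : Set P) : Prop :=
  A ⊆ B ∧ ∀ a ∈ A, ∀ x ∈ B, x ≤ a → x ∈ A

/-- A (sub)poset is constructible if either it has a greatest element, or it is a union
`Q ∪ R` of closed subposets such that `Q ∩ R` is of codimension one both in `Q` and in
`R`, and each of `Q`, `R` and `Q ∩ R` is constructible. -/
inductive PosetConstructible {P : Type*} [PartialOrder P] : Set P → Prop where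
  | cone {A : Set P} {g : P} (hg : g ∈ A) (hgreatest : ∀ x ∈ A, x ≤ g) :
      PosetConstructible A
  | step {Q R : Set P} (hQ : IsClosedSubposet (Q ∪ R) Q) (hR : IsClosedSubposet (Q ∪ R) R)
      (hcQ : CodimOneIn (Q ∩ R) Q) (hcR : CodimOneIn (Q ∩ R) R)
      (cQ : PosetConstructible Q) (cR : PosetConstructible R)
      (cQR : PosetConstructible (Q ∩ R)) : PosetConstructible (Q ∪ R)

/-- A monotone map `f : P → Q` is a filtration map if `f⁻¹(⌊q⌋ \ {q})` is of
codimension one in `f⁻¹(⌊q⌋)` for every `q`. -/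
def IsFiltrationMap {P Q : Type*} [PartialOrder P] [PartialOrder Q] (f : P → Q) : Prop :=
  ∀ q : Q, CodimOneIn (f ⁻¹' {y | y < q}) (f ⁻¹' {y | y ≤ q})

/-- A monotone map `f : P → Q` is a pure filtration map if `f⁻¹(⌊q⌋ \ {q})` is of
pure codimension one in `f⁻¹(⌊q⌋)` for every `q`. -/
def IsPureFiltrationMap {P Q : Type*} [PartialOrder P] [PartialOrder Q] (f : P → Q) :
    Prop :=
  ∀ q : Q, PureCodimOneIn (f ⁻¹' {y | y < q}) (f ⁻¹' {y | y ≤ q})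

/-- A monotone map is constructible if it is a filtration map and every `f⁻¹(⌊q⌋)` is
constructible. -/
def IsConstructibleMap {P Q : Type*} [PartialOrder P] [PartialOrder Q] (f : P → Q) :
    Prop :=
  IsFiltrationMap f ∧ ∀ q : Q, PosetConstructible (f ⁻¹' {y | y ≤ q})

/-! In a constructible poset, an element covered by some maximal element is covered only by
maximal elements; a codimension-one subposet of it is therefore automatically pure. This is
proved along the construction. For a step `Q ∪ R` and `b ∈ Q` covering `a`, it suffices to
find a maximal element of `Q` covering `a`, since maximal elements of `Q` stay maximal in
`Q ∪ R` (otherwise they would lie in `Q ∩ R`, whose maximal elements are not maximal in `Q`).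
If the given maximal cover `m` of `a` is not in `Q`, then `a` is maximal in `Q ∩ R`: a minimal
element of `Q ∩ R` above `a` would cover `a` in `R`, hence be maximal in `R` by induction,
which codimension one of `Q ∩ R` in `R` forbids. Codimension one in `Q` then supplies the
cover. -/

section

variable {P : Type*} [PartialOrder P]

def PureCovers (A : Set P) : Prop :=
  ∀ ⦃a m b : P⦄, IsMaxIn A m → CoversIn A a m → CoversIn A a b → IsMaxIn A b

theorem IsMaxIn.mono {A B : Set P} {b : P} (h : IsMaxIn B b) (hAB : A ⊆ B) (hb : b ∈ A) :
    IsMaxIn A b :=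
  ⟨hb, fun x hx => h.2 x (hAB hx)⟩

theorem CoversIn.mono {A B : Set P} {a b : P} (h : CoversIn B a b) (hAB : A ⊆ B) (ha : a ∈ A)
    (hb : b ∈ A) : CoversIn A a b :=
  ⟨ha, hb, h.2.2.1, fun x hx => h.2.2.2 x (hAB hx)⟩

theorem CodimOneIn.not_isMaxIn {A B : Set P} {a : P} (h : CodimOneIn A B) (ha : IsMaxIn A a) :
    ¬IsMaxIn B a := fun haB =>
  let ⟨_, _, hcov⟩ := h a ha
  hcov.2.2.1.ne' (haB.2 _ hcov.2.1 hcov.2.2.1.le)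

theorem CodimOneIn.pureCodimOneIn {A B : Set P} (h : CodimOneIn A B) (hB : PureCovers B) :
    PureCodimOneIn A B :=
  ⟨h, fun a ha _ hab =>
    let ⟨_, hm, ham⟩ := h a ha
    hB hm ham hab⟩

theorem PureCovers.of_isGreatest {A : Set P} {g : P} (hg : g ∈ A) (hgreatest : ∀ x ∈ A, x ≤ g) :
    PureCovers A := by
  intro a m b hm ham hab
  obtain rfl : g = m := hm.2 g hg (hgreatest m hm.1)
  obtain rfl | hne := eq_or_ne b g
  · exact hm
  · exact absurd ((hgreatest b hab.2.1).lt_of_ne hne) (ham.2.2.2 b hab.2.1 hab.2.2.1)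

section ConstructionStep

variable {Q R : Set P}

theorem isMaxIn_union_of_isMaxIn_left (hR : IsClosedSubposet (Q ∪ R) R)
    (hcQ : CodimOneIn (Q ∩ R) Q) {b : P} (hb : IsMaxIn Q b) : IsMaxIn (Q ∪ R) b := by
  refine ⟨Or.inl hb.1, fun x hx hbx => ?_⟩
  rcases hx with hxQ | hxR
  · exact hb.2 x hxQ hbx
  · have hbR : b ∈ R := hR.2 x hxR b (Or.inl hb.1) hbx
    exact absurd hb (hcQ.not_isMaxIn (hb.mono Set.inter_subset_left ⟨hb.1, hbR⟩))

theorem isMaxIn_inter_of_coversIn_right [WellFoundedLT P] (hQ : IsClosedSubposet (Q ∪ R) Q)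
    (hcR : CodimOneIn (Q ∩ R) R) (ihR : PureCovers R) {a m : P} (ha : a ∈ Q ∩ R)
    (hm : IsMaxIn R m) (ham : CoversIn R a m) : IsMaxIn (Q ∩ R) a := by
  refine ⟨ha, fun z hz haz => by_contra fun hne => ?_⟩
  obtain ⟨z₀, hz₀⟩ :=
    exists_minimal_of_wellFoundedLT (fun w => w ∈ Q ∩ R ∧ a < w) ⟨z, hz, haz.lt_of_ne' hne⟩
  have hcov : CoversIn R a z₀ := by
    refine ⟨ha.2, hz₀.prop.1.2, hz₀.prop.2, fun w hwR haw hwz₀ => ?_⟩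
    have hwQ : w ∈ Q := hQ.2 z₀ hz₀.prop.1.1 w (Or.inr hwR) hwz₀.le
    exact hz₀.not_lt ⟨⟨hwQ, hwR⟩, haw⟩ hwz₀
  have hz₀R : IsMaxIn R z₀ := ihR hm ham hcov
  exact hcR.not_isMaxIn (hz₀R.mono Set.inter_subset_right hz₀.prop.1) hz₀R

theorem exists_isMaxIn_coversIn_left [WellFoundedLT P] (hQ : IsClosedSubposet (Q ∪ R) Q)
    (hR : IsClosedSubposet (Q ∪ R) R) (hcQ : CodimOneIn (Q ∩ R) Q)
    (hcR : CodimOneIn (Q ∩ R) R) (ihR : PureCovers R) {a m : P} (ha : a ∈ Q)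
    (hm : IsMaxIn (Q ∪ R) m) (ham : CoversIn (Q ∪ R) a m) :
    ∃ m', IsMaxIn Q m' ∧ CoversIn Q a m' := by
  rcases hm.1 with hmQ | hmR
  · exact ⟨m, hm.mono hQ.1 hmQ, ham.mono hQ.1 ha hmQ⟩
  · have haR : a ∈ R := hR.2 m hmR a ham.1 ham.2.2.1.le
    exact hcQ a (isMaxIn_inter_of_coversIn_right hQ hcR ihR ⟨ha, haR⟩ (hm.mono hR.1 hmR)
      (ham.mono hR.1 haR hmR))

theorem isMaxIn_union_of_coversIn_left [WellFoundedLT P] (hQ : IsClosedSubposet (Q ∪ R) Q)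
    (hR : IsClosedSubposet (Q ∪ R) R) (hcQ : CodimOneIn (Q ∩ R) Q)
    (hcR : CodimOneIn (Q ∩ R) R) (ihQ : PureCovers Q) (ihR : PureCovers R) {a m b : P}
    (hm : IsMaxIn (Q ∪ R) m) (ham : CoversIn (Q ∪ R) a m) (hab : CoversIn (Q ∪ R) a b)
    (hb : b ∈ Q) : IsMaxIn (Q ∪ R) b := by
  have ha : a ∈ Q := hQ.2 b hb a hab.1 hab.2.2.1.le
  obtain ⟨m', hm', ham'⟩ := exists_isMaxIn_coversIn_left hQ hR hcQ hcR ihR ha hm ham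
  exact isMaxIn_union_of_isMaxIn_left hR hcQ (ihQ hm' ham' (hab.mono hQ.1 ha hb))

theorem PureCovers.union [WellFoundedLT P] (hQ : IsClosedSubposet (Q ∪ R) Q)
    (hR : IsClosedSubposet (Q ∪ R) R) (hcQ : CodimOneIn (Q ∩ R) Q)
    (hcR : CodimOneIn (Q ∩ R) R) (ihQ : PureCovers Q) (ihR : PureCovers R) :
    PureCovers (Q ∪ R) := by
  intro a m b hm ham hab
  rcases hab.2.1 with hbQ | hbR
  · exact isMaxIn_union_of_coversIn_left hQ hR hcQ hcR ihQ ihR hm ham hab hbQ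
  · rw [Set.union_comm] at hQ hR hm ham hab ⊢
    rw [Set.inter_comm] at hcQ hcR
    exact isMaxIn_union_of_coversIn_left hR hQ hcR hcQ ihR ihQ hm ham hab hbR

end ConstructionStep

theorem PosetConstructible.pureCovers [WellFoundedLT P] {A : Set P}
    (h : PosetConstructible A) : PureCovers A := by
  induction h with
  | cone hg hgreatest => exact .of_isGreatest hg hgreatest
  | step hQ hR hcQ hcR _ _ _ ihQ ihR => exact .union hQ hR hcQ hcR ihQ ihR

end

theorem construction_step_pure_general {P : Type*} [PartialOrder P] [Finite P] (Q R : Set P)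
    (hcQ : CodimOneIn (Q ∩ R) Q) (hcR : CodimOneIn (Q ∩ R) R)
    (cQ : PosetConstructible Q) (cR : PosetConstructible R) :
    PureCodimOneIn (Q ∩ R) Q ∧ PureCodimOneIn (Q ∩ R) R :=
  ⟨hcQ.pureCodimOneIn cQ.pureCovers, hcR.pureCodimOneIn cR.pureCovers⟩

/-- If `P = Q ∪ R` is a construction step (with `Q`, `R`, `Q ∩ R` constructible and
`Q ∩ R` of codimension one in `Q` and in `R`), then `Q ∩ R` is of pure codimension one
both in `Q` and in `R`. -/
theorem construction_step_pure {P : Type*} [PartialOrder P] [Finite P] (Q R : Set P)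
    (hunion : Q ∪ R = Set.univ)
    (hQ : IsClosedSubposet Set.univ Q) (hR : IsClosedSubposet Set.univ R)
    (hcQ : CodimOneIn (Q ∩ R) Q) (hcR : CodimOneIn (Q ∩ R) R)
    (cQ : PosetConstructible Q) (cR : PosetConstructible R)
    (cQR : PosetConstructible (Q ∩ R)) :
    PureCodimOneIn (Q ∩ R) Q ∧ PureCodimOneIn (Q ∩ R) R :=
  construction_step_pure_general Q R hcQ hcR cQ cR
end

section
/- Let f : P → Q be a filtration map of finite posets and let Z be a closed subposet of Q. If Z is of codimension one in Q, then f⁻¹(Z) is of codimension one in P. -/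
/-- If `f : P → Q` is a filtration map and `Z` is a closed subposet of `Q` of
codimension one in `Q`, then `f⁻¹(Z)` is of codimension one in `P`. -/
theorem filtration_preimage_codimOne {P Q : Type*} [PartialOrder P] [PartialOrder Q]
    [Finite P] [Finite Q] (f : P → Q) (hf : Monotone f) (hfil : IsFiltrationMap f)
    (Z : Set Q) (hZ : IsClosedSubposet Set.univ Z) (hcd : CodimOneIn Z Set.univ) :
    CodimOneIn (f ⁻¹' Z) Set.univ := by
  intro a ha
  obtain ⟨haZ, hamax⟩ := ha
  have hqZ : f a ∈ Z := haZ
  -- `f a` is maximal in `Z`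
  have hqmax : IsMaxIn Z (f a) := by
    refine ⟨hqZ, ?_⟩
    intro q' hq'Z hle
    by_contra hne
    have hlt : f a < q' := lt_of_le_of_ne hle (fun h => hne h.symm)
    have hamax' : IsMaxIn (f ⁻¹' {y | y < q'}) a := by
      refine ⟨hlt, ?_⟩
      intro x hx hax
      exact hamax x (hZ.2 q' hq'Z (f x) (Set.mem_univ _) (le_of_lt hx)) hax
    obtain ⟨b, hbmax, hcov⟩ := hfil q' a hamax'
    have hbZ : f b ∈ Z := hZ.2 q' hq'Z (f b) (Set.mem_univ _) hbmax.1
    exact absurd (hamax b hbZ (le_of_lt hcov.2.2.1)) (ne_of_gt hcov.2.2.1)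
  obtain ⟨q', hq'max, hq'cov⟩ := hcd (f a) hqmax
  -- `a` is maximal in `f⁻¹{y < q'}`
  have hamax' : IsMaxIn (f ⁻¹' {y | y < q'}) a := by
    refine ⟨hq'cov.2.2.1, ?_⟩
    intro x hx hax
    have hfx : f a ≤ f x := hf hax
    have hfxq : f x = f a := by
      rcases eq_or_lt_of_le hfx with h | h
      · exact h.symm
      · exact absurd hx (hq'cov.2.2.2 (f x) (Set.mem_univ _) h)
    refine hamax x ?_ hax
    show f x ∈ Z
    rw [hfxq]; exact hqZ
  obtain ⟨b, hbmax, hcov⟩ := hfil q' a hamax'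
  have hab : a < b := hcov.2.2.1
  have hfb : f b = q' := by
    rcases eq_or_lt_of_le (hbmax.1 : f b ≤ q') with h | h
    · exact h
    · rcases eq_or_lt_of_le (hf (le_of_lt hab) : f a ≤ f b) with h2 | h2
      · exact absurd (hamax b (by show f b ∈ Z; rw [← h2]; exact hqZ)
          (le_of_lt hab)) (ne_of_gt hab)
      · exact absurd h (hq'cov.2.2.2 (f b) (Set.mem_univ _) h2)
  refine ⟨b, ⟨Set.mem_univ _, ?_⟩, Set.mem_univ _, Set.mem_univ _, hab, ?_⟩
  · intro x _ hbx
    have hx' : q' ≤ f x := hfb ▸ hf hbx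
    have hxq' : f x = q' := hq'max.2 (f x) (Set.mem_univ _) hx'
    exact hbmax.2 x (le_of_eq hxq') hbx
  · intro x _ hax hxb
    have hx' : f x ≤ q' := hfb ▸ hf (le_of_lt hxb)
    exact hcov.2.2.2 x hx' hax hxb
end

section
/- Let f : P → Q and g : Q → R be monotone maps of finite posets. If f and g are pure filtration maps, then g ∘ f is a pure filtration map. If f and g ∘ f are pure filtration maps and f is surjective, then g is a pure filtration map. -/
/-!
For a filtration map `f`, maximal elements of `f⁻¹ S` lie over maximal elements of `S`. So a
maximal element `a` of `(g ∘ f)⁻¹(⌊r⌋ \ {r})` lies over a maximal element of `g⁻¹(⌊r⌋ \ {r})`,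
and any cover `q` of `f a` in `g⁻¹⌊r⌋` makes `a` maximal in `f⁻¹(⌊q⌋ \ {q})`. The covers of `a`
in `f⁻¹⌊q⌋` over `q` are exactly its covers in `(g ∘ f)⁻¹⌊r⌋` over `q`, and when `q` is maximal
in `g⁻¹⌊r⌋` the same holds for maximal elements; this transports (pure) codimension one from
`f` and `g` to `g ∘ f`, and, lifting maximal elements along the surjection `f`, from `f` and
`g ∘ f` back to `g`.
-/

section Poset

variable {P : Type*} [PartialOrder P] {S T : Set P} {a b : P}

theorem IsMaxIn.notMem_of_lt (ha : IsMaxIn S a) (hab : a < b) : b ∉ S :=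
  fun hb => hab.ne' (ha.2 b hb hab.le)

theorem CoversIn.mono_s11 (h : CoversIn T a b) (hST : S ⊆ T) (ha : a ∈ S) (hb : b ∈ S) :
    CoversIn S a b :=
  ⟨ha, hb, h.2.2.1, fun x hx => h.2.2.2 x (hST hx)⟩

theorem CoversIn.of_forall_lt_mem (h : CoversIn S a b) (ha : a ∈ T) (hb : b ∈ T)
    (hTS : ∀ x ∈ T, x < b → x ∈ S) : CoversIn T a b :=
  ⟨ha, hb, h.2.2.1, fun x hx hax hxb => h.2.2.2 x (hTS x hx hxb) hax hxb⟩

theorem exists_isMaxIn_ge [Finite P] (ha : a ∈ S) : ∃ m, a ≤ m ∧ IsMaxIn S m := by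
  obtain ⟨m, ⟨hmS, ham⟩, hmax⟩ :=
    Set.Finite.exists_maximalFor id {x ∈ S | a ≤ x} (Set.toFinite _) ⟨a, ha, le_rfl⟩
  exact ⟨m, ham, hmS, fun x hx hmx => le_antisymm (hmax ⟨hx, ham.trans hmx⟩ hmx) hmx⟩

theorem exists_coversIn_le [Finite P] (ha : a ∈ T) (hb : b ∈ T) (hab : a < b) :
    ∃ c, CoversIn T a c ∧ c ≤ b := by
  obtain ⟨c, ⟨hcT, hac, hcb⟩, hmin⟩ := Set.Finite.exists_minimalFor id
    {x ∈ T | a < x ∧ x ≤ b} (Set.toFinite _) ⟨b, hb, hab, le_rfl⟩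
  refine ⟨c, ⟨ha, hcT, hac, fun x hx hax hxc => ?_⟩, hcb⟩
  exact not_lt_of_ge (hmin ⟨hx, hax, hxc.le.trans hcb⟩ hxc.le) hxc

theorem CoversIn.of_isMaxIn [Finite P] (hcov : ∀ c, CoversIn T a c → IsMaxIn T c)
    (ha : a ∈ T) (hb : IsMaxIn T b) (hab : a < b) : CoversIn T a b := by
  refine ⟨ha, hb.1, hab, fun x hx hax hxb => ?_⟩
  obtain ⟨c, hc, hcx⟩ := exists_coversIn_le ha hx hax
  exact (hcx.trans_lt hxb).ne ((hcov c hc).2 b hb.1 (hcx.trans hxb.le)).symm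

end Poset

section Map

variable {P Q : Type*} [PartialOrder P] [PartialOrder Q] {f : P → Q} {S : Set Q} {a b : P}

theorem IsMaxIn.apply_eq_of_lt {q : Q} (ha : IsMaxIn (f ⁻¹' {y | y < q}) a) (hab : a < b)
    (hb : f b ≤ q) : f b = q :=
  hb.lt_or_eq.resolve_left (ha.notMem_of_lt hab)

theorem IsMaxIn.apply_lt_apply (hf : Monotone f) (ha : IsMaxIn (f ⁻¹' S) a) (hab : a < b) :
    f a < f b :=
  (hf hab.le).lt_of_ne fun h => ha.notMem_of_lt hab (show f b ∈ S from h ▸ ha.1)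

theorem IsPureFiltrationMap.isFiltrationMap (hf : IsPureFiltrationMap f) : IsFiltrationMap f :=
  fun q => (hf q).1

theorem IsFiltrationMap.isMaxIn_image [Finite P] (hf : IsFiltrationMap f)
    (ha : IsMaxIn (f ⁻¹' S) a) : IsMaxIn S (f a) := by
  refine ⟨ha.1, fun z hz haz => ?_⟩
  by_contra hne
  -- the fibre below `z` has a maximal element above `a`, and its cover lies over `z`
  obtain ⟨a', haa', ha'⟩ :=
    exists_isMaxIn_ge (S := f ⁻¹' {y | y < z}) (lt_of_le_of_ne haz (Ne.symm hne))
  obtain ⟨b, hb, ha'b⟩ := hf z a' ha'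
  have hbS : f b ∈ S := ha'.apply_eq_of_lt ha'b.2.2.1 hb.1 ▸ hz
  exact ha.notMem_of_lt (haa'.trans_lt ha'b.2.2.1) hbS

theorem exists_isMaxIn_preimage_of_surjective [Finite P] (hf : Monotone f)
    (hsurj : Function.Surjective f) {q : Q} (hq : IsMaxIn S q) :
    ∃ a, IsMaxIn (f ⁻¹' S) a ∧ f a = q := by
  obtain ⟨a₀, rfl⟩ := hsurj q
  obtain ⟨a, ha₀a, ha⟩ := exists_isMaxIn_ge (S := f ⁻¹' S) hq.1
  exact ⟨a, ha, hq.2 (f a) ha.1 (hf ha₀a)⟩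

theorem isMaxIn_preimage_of_isMaxIn_fiber (hf : Monotone f) (hS : IsMaxIn S (f b))
    (hb : IsMaxIn (f ⁻¹' {y | y ≤ f b}) b) : IsMaxIn (f ⁻¹' S) b :=
  ⟨hS.1, fun p hp hbp => hb.2 p (hS.2 (f p) hp (hf hbp)).le hbp⟩

end Map

section Comp

variable {P Q R : Type*} [PartialOrder P] [PartialOrder Q] [PartialOrder R]
  {f : P → Q} {g : Q → R} {r : R} {q : Q} {a b : P}

theorem isMaxIn_preimage_lt_of_coversIn (hf : Monotone f) (hg : Monotone g)
    (ha : IsMaxIn ((g ∘ f) ⁻¹' {y | y < r}) a) (hq : CoversIn (g ⁻¹' {y | y ≤ r}) (f a) q) :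
    IsMaxIn (f ⁻¹' {y | y < q}) a := by
  refine ⟨hq.2.2.1, fun p hpq hap => ?_⟩
  by_contra hne
  have hfap : f a < f p :=
    ha.apply_lt_apply (S := g ⁻¹' {y | y < r}) hf (lt_of_le_of_ne hap (Ne.symm hne))
  exact hq.2.2.2 (f p) ((hg hpq.le).trans hq.2.1) hfap hpq

theorem coversIn_preimage_le_iff (hf : Monotone f) (hg : Monotone g) (hq : g q ≤ r)
    (hb : f b ≤ q) :
    CoversIn (f ⁻¹' {y | y ≤ q}) a b ↔ CoversIn ((g ∘ f) ⁻¹' {y | y ≤ r}) a b := by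
  have hsub : f ⁻¹' {y | y ≤ q} ⊆ (g ∘ f) ⁻¹' {y | y ≤ r} := fun x hx => (hg hx).trans hq
  refine ⟨fun h => h.of_forall_lt_mem (hsub h.1) (hsub hb) fun x _ hxb => ?_,
    fun h => h.mono_s11 hsub ((hf h.2.2.1.le).trans hb) hb⟩
  exact (hf hxb.le).trans hb

theorem IsFiltrationMap.comp [Finite P] (hf : Monotone f) (hg : Monotone g)
    (hf' : IsFiltrationMap f) (hg' : IsFiltrationMap g) : IsFiltrationMap (g ∘ f) := by
  intro r a ha
  obtain ⟨q, hqmax, hq⟩ := hg' r (f a) (hf'.isMaxIn_image (S := g ⁻¹' {y | y < r}) ha)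
  have haq := isMaxIn_preimage_lt_of_coversIn hf hg ha hq
  obtain ⟨b, hbmax, hab⟩ := hf' q a haq
  obtain rfl : f b = q := haq.apply_eq_of_lt hab.2.2.1 hbmax.1
  exact ⟨b, isMaxIn_preimage_of_isMaxIn_fiber (S := g ⁻¹' {y | y ≤ r}) hf hqmax hbmax,
    (coversIn_preimage_le_iff hf hg hqmax.1 le_rfl).1 hab⟩

theorem IsPureFiltrationMap.comp [Finite P] [Finite Q] (hf : Monotone f) (hg : Monotone g)
    (hf' : IsPureFiltrationMap f) (hg' : IsPureFiltrationMap g) :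
    IsPureFiltrationMap (g ∘ f) := by
  refine fun r => ⟨hf'.isFiltrationMap.comp hf hg hg'.isFiltrationMap r, fun a ha b hab => ?_⟩
  have hfa := hf'.isFiltrationMap.isMaxIn_image (S := g ⁻¹' {y | y < r}) ha
  obtain ⟨q, hq, hqb⟩ := exists_coversIn_le (T := g ⁻¹' {y | y ≤ r}) hab.1 hab.2.1
    (ha.apply_lt_apply (S := g ⁻¹' {y | y < r}) hf hab.2.2.1)
  have hqmax := (hg' r).2 (f a) hfa q hq
  obtain rfl : f b = q := hqmax.2 (f b) hab.2.1 hqb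
  have haq := isMaxIn_preimage_lt_of_coversIn hf hg ha hq
  have hab' := (coversIn_preimage_le_iff hf hg hqmax.1 le_rfl).2 hab
  exact isMaxIn_preimage_of_isMaxIn_fiber (S := g ⁻¹' {y | y ≤ r}) hf hqmax
    ((hf' (f b)).2 a haq b hab')

theorem IsPureFiltrationMap.of_comp [Finite P] [Finite Q] (hf : Monotone f) (hg : Monotone g)
    (hf' : IsPureFiltrationMap f) (hgf : IsPureFiltrationMap (g ∘ f))
    (hsurj : Function.Surjective f) : IsPureFiltrationMap g := by
  intro r
  have lift (q : Q) (hq : IsMaxIn (g ⁻¹' {y | y < r}) q) :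
      ∃ a, IsMaxIn ((g ∘ f) ⁻¹' {y | y < r}) a ∧ f a = q :=
    exists_isMaxIn_preimage_of_surjective hf hsurj hq
  have cover_isMaxIn (q : Q) (hq : IsMaxIn (g ⁻¹' {y | y < r}) q) (q' : Q)
      (hqq' : CoversIn (g ⁻¹' {y | y ≤ r}) q q') : IsMaxIn (g ⁻¹' {y | y ≤ r}) q' := by
    obtain ⟨a, ha, rfl⟩ := lift q hq
    have haq' := isMaxIn_preimage_lt_of_coversIn hf hg ha hqq'
    obtain ⟨c, hcmax, hac⟩ := (hf' q').1 a haq'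
    have hcq' : f c = q' := haq'.apply_eq_of_lt hac.2.2.1 hcmax.1
    have hac' := (coversIn_preimage_le_iff hf hg hqq'.2.1 hcmax.1).1 hac
    exact hcq' ▸ hf'.isFiltrationMap.isMaxIn_image (S := g ⁻¹' {y | y ≤ r}) ((hgf r).2 a ha c hac')
  refine ⟨fun q hq => ?_, cover_isMaxIn⟩
  obtain ⟨a, ha, rfl⟩ := lift q hq
  obtain ⟨b, hbmax, hab⟩ := (hgf r).1 a ha
  have hfb := hf'.isFiltrationMap.isMaxIn_image (S := g ⁻¹' {y | y ≤ r}) hbmax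
  have hfab := ha.apply_lt_apply (S := g ⁻¹' {y | y < r}) hf hab.2.2.1
  exact ⟨f b, hfb, CoversIn.of_isMaxIn (cover_isMaxIn (f a) hq) (le_of_lt hq.1) hfb hfab⟩

end Comp

theorem pure_filtration_composition_general {P Q R : Type*}
    [PartialOrder P] [PartialOrder Q] [PartialOrder R] [Finite P] [Finite Q]
    (f : P → Q) (g : Q → R) (hf : Monotone f) (hg : Monotone g) :
    (IsPureFiltrationMap f → IsPureFiltrationMap g → IsPureFiltrationMap (g ∘ f)) ∧
    (IsPureFiltrationMap f → IsPureFiltrationMap (g ∘ f) → Function.Surjective f →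
      IsPureFiltrationMap g) :=
  ⟨fun hf' hg' => hf'.comp hf hg hg', fun hf' hgf hsurj => hf'.of_comp hf hg hgf hsurj⟩

/-- Pure filtration maps compose; and if `f` and `g ∘ f` are pure filtration maps with
`f` surjective, then `g` is a pure filtration map. -/
theorem pure_filtration_composition {P Q R : Type*}
    [PartialOrder P] [PartialOrder Q] [PartialOrder R] [Finite P] [Finite Q] [Finite R]
    (f : P → Q) (g : Q → R) (hf : Monotone f) (hg : Monotone g) :
    (IsPureFiltrationMap f → IsPureFiltrationMap g → IsPureFiltrationMap (g ∘ f)) ∧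
    (IsPureFiltrationMap f → IsPureFiltrationMap (g ∘ f) → Function.Surjective f →
      IsPureFiltrationMap g) :=
  pure_filtration_composition_general f g hf hg
end

section
/- If P is a constructible finite poset, then for every p ∈ P the dual cone ⌈p⌉ = {x ∈ P : x ≥ p}, with the induced order, is a constructible poset. -/
theorem cone_constructible_aux {P : Type*} [PartialOrder P] {A : Set P}
    (h : PosetConstructible A) :
    ∀ p ∈ A, PosetConstructible ({x | p ≤ x} ∩ A) := by
  induction h with
  | @cone A g hg hgreatest =>
    intro p hp
    exact PosetConstructible.cone (g := g) ⟨hgreatest p hp, hg⟩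
      (fun x hx => hgreatest x hx.2)
  | @step Q R hQ hR hcQ hcR cQ cR cQR ihQ ihR ihQR =>
    intro p hp
    by_cases hpQ : p ∈ Q
    · by_cases hpR : p ∈ R
      · -- p ∈ Q ∩ R
        set Q' : Set P := {x | p ≤ x} ∩ Q with hQ'def
        set R' : Set P := {x | p ≤ x} ∩ R with hR'def
        have hQR' : Q' ∩ R' = {x | p ≤ x} ∩ (Q ∩ R) := by
          ext x; simp [hQ'def, hR'def]; tauto
        have hUn : Q' ∪ R' = {x | p ≤ x} ∩ (Q ∪ R) := by
          ext x; simp [hQ'def, hR'def]; tauto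
        have hclQ' : IsClosedSubposet (Q' ∪ R') Q' := by
          refine ⟨Set.subset_union_left, ?_⟩
          rintro a ⟨hpa, haQ⟩ x hx hxa
          have hxQR : x ∈ Q ∪ R := by
            rcases hx with ⟨_, h⟩ | ⟨_, h⟩
            · exact Or.inl h
            · exact Or.inr h
          have hpx : p ≤ x := by
            rcases hx with ⟨h, _⟩ | ⟨h, _⟩ <;> exact h
          exact ⟨hpx, hQ.2 a haQ x hxQR hxa⟩
        have hclR' : IsClosedSubposet (Q' ∪ R') R' := by
          refine ⟨Set.subset_union_right, ?_⟩
          rintro a ⟨hpa, haR⟩ x hx hxa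
          have hxQR : x ∈ Q ∪ R := by
            rcases hx with ⟨_, h⟩ | ⟨_, h⟩
            · exact Or.inl h
            · exact Or.inr h
          have hpx : p ≤ x := by
            rcases hx with ⟨h, _⟩ | ⟨h, _⟩ <;> exact h
          exact ⟨hpx, hR.2 a haR x hxQR hxa⟩
        have key : ∀ (S : Set P), CodimOneIn (Q ∩ R) S →
            CodimOneIn (Q' ∩ R') ({x | p ≤ x} ∩ S) := by
          intro S hc a ha
          have hamax : IsMaxIn (Q ∩ R) a := by
            rw [hQR'] at ha
            refine ⟨ha.1.2, fun x hx hax => ?_⟩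
            exact ha.2 x ⟨le_trans ha.1.1 hax, hx⟩ hax
          obtain ⟨b, hbmax, hcov⟩ := hc a hamax
          have hpa : p ≤ a := by rw [hQR'] at ha; exact ha.1.1
          have hpb : p ≤ b := le_trans hpa hcov.2.2.1.le
          refine ⟨b, ⟨⟨hpb, hbmax.1⟩, fun x hx hbx => hbmax.2 x hx.2 hbx⟩,
            ⟨⟨hpa, hcov.1⟩, ⟨hpb, hcov.2.1⟩, hcov.2.2.1,
              fun x hx hax => hcov.2.2.2 x hx.2 hax⟩⟩
        have hcQ' : CodimOneIn (Q' ∩ R') Q' := key Q hcQ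
        have hcR' : CodimOneIn (Q' ∩ R') R' := key R hcR
        have cQ' : PosetConstructible Q' := ihQ p hpQ
        have cR' : PosetConstructible R' := ihR p hpR
        have cQR' : PosetConstructible (Q' ∩ R') := by
          rw [hQR']; exact ihQR p ⟨hpQ, hpR⟩
        have := PosetConstructible.step hclQ' hclR' hcQ' hcR' cQ' cR' cQR'
        rwa [hUn] at this
      · -- p ∈ Q \ R
        have : {x | p ≤ x} ∩ (Q ∪ R) = {x | p ≤ x} ∩ Q := by
          ext x
          constructor
          · rintro ⟨hpx, hx | hx⟩
            · exact ⟨hpx, hx⟩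
            · exact absurd (hR.2 x hx p (Or.inl hpQ) hpx) hpR
          · rintro ⟨hpx, hx⟩; exact ⟨hpx, Or.inl hx⟩
        rw [this]; exact ihQ p hpQ
    · have hpR : p ∈ R := hp.resolve_left hpQ
      have : {x | p ≤ x} ∩ (Q ∪ R) = {x | p ≤ x} ∩ R := by
        ext x
        constructor
        · rintro ⟨hpx, hx | hx⟩
          · exact absurd (hQ.2 x hx p (Or.inr hpR) hpx) hpQ
          · exact ⟨hpx, hx⟩
        · rintro ⟨hpx, hx⟩; exact ⟨hpx, Or.inr hx⟩
      rw [this]; exact ihR p hpR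

/-- If `P` is a constructible finite poset, then every dual cone
`⌈p⌉ = {x : x ≥ p}` is constructible. -/
theorem dual_cones_constructible {P : Type*} [PartialOrder P] [Finite P]
    (hP : PosetConstructible (Set.univ : Set P)) :
    ∀ p : P, PosetConstructible {x : P | p ≤ x} := by
  intro p
  have := cone_constructible_aux hP p (Set.mem_univ p)
  simpa using this
end

section
/- Let f : P → Q be a constructible map of finite posets, and suppose Q is a constructible poset. Then P is a constructible poset. -/
section Aux

variable {P Q : Type*} [PartialOrder P] [PartialOrder Q]

/-- In a finite poset, above every element of a set there is a maximal element of the set. -/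
lemma exists_le_isMaxIn [Finite P] {A : Set P} {a : P} (ha : a ∈ A) :
    ∃ b, a ≤ b ∧ IsMaxIn A b := by
  obtain ⟨b, hab, hb⟩ := Finite.exists_le_maximal (p := fun x => x ∈ A) ha
  exact ⟨b, hab, hb.1, fun x hx hbx => le_antisymm (hb.2 hx hbx) hbx⟩

/-- If `f` is a monotone filtration map and `C` is downward closed, then the image of a
maximal element of `f ⁻¹' C` is maximal in `C`. -/
lemma isMaxIn_image [Finite P] [Finite Q] {f : P → Q} (hf : Monotone f)
    (hfil : IsFiltrationMap f) {C : Set Q} (hC : ∀ x s, s ∈ C → x ≤ s → x ∈ C)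
    {p : P} (hp : IsMaxIn (f ⁻¹' C) p) : IsMaxIn C (f p) := by
  refine ⟨hp.1, fun q' hq' hle => ?_⟩
  by_contra hne
  have hlt : f p < q' := lt_of_le_of_ne hle (fun h => hne h.symm)
  obtain ⟨p', hpp', hp'⟩ := exists_le_isMaxIn (A := f ⁻¹' {y | y < q'}) hlt
  obtain ⟨c, hcmax, hccov⟩ := hfil q' p' hp'
  have hcC : c ∈ f ⁻¹' C := hC _ _ hq' hcmax.1
  have hpc : p < c := lt_of_le_of_lt hpp' hccov.2.2.1
  exact hpc.ne' (hp.2 c hcC hpc.le)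

/-- The key codimension-one transfer lemma. -/
lemma codim_pullback [Finite P] [Finite Q] {f : P → Q} (hf : Monotone f)
    (hfil : IsFiltrationMap f) {A B : Set Q}
    (hA : ∀ x s, s ∈ A → x ≤ s → x ∈ A) (hB : ∀ x s, s ∈ B → x ≤ s → x ∈ B)
    (h : CodimOneIn (A ∩ B) A) : CodimOneIn (f ⁻¹' A ∩ f ⁻¹' B) (f ⁻¹' A) := by
  intro p hp
  rw [← Set.preimage_inter] at hp
  have hAB : ∀ x s, s ∈ A ∩ B → x ≤ s → x ∈ A ∩ B :=
    fun x s hs hxs => ⟨hA x s hs.1 hxs, hB x s hs.2 hxs⟩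
  have hq : IsMaxIn (A ∩ B) (f p) := isMaxIn_image hf hfil hAB hp
  obtain ⟨q', hq'max, hq'cov⟩ := h (f p) hq
  -- p is maximal in f ⁻¹' {y | y < q'}
  have hpmax : IsMaxIn (f ⁻¹' {y | y < q'}) p := by
    refine ⟨hq'cov.2.2.1, fun x hx hpx => ?_⟩
    have hfxA : f x ∈ A := hA _ _ hq'max.1 (le_of_lt hx)
    have hfpfx : f p ≤ f x := hf hpx
    have hfx : f x = f p := by
      by_contra hne
      exact hq'cov.2.2.2 (f x) hfxA (lt_of_le_of_ne hfpfx (fun h => hne h.symm)) hx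
    exact hp.2 x (by rw [Set.mem_preimage, hfx]; exact hq.1) hpx
  obtain ⟨b, hbmax, hbcov⟩ := hfil q' p hpmax
  have hpb : p < b := hbcov.2.2.1
  have hfbA : f b ∈ A := hA _ _ hq'max.1 hbmax.1
  -- f b = f p or f b = q'
  have hfb : f b = f p ∨ f b = q' := by
    rcases eq_or_lt_of_le (hf hpb.le) with h1 | h1
    · exact Or.inl h1.symm
    · right
      by_contra hne
      exact hq'cov.2.2.2 (f b) hfbA h1 (lt_of_le_of_ne hbmax.1 hne)
  have hfb' : f b = q' := by
    rcases hfb with h1 | h1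
    · exfalso
      have : b = p := hp.2 b (by rw [Set.mem_preimage, h1]; exact hq.1) hpb.le
      exact absurd (this ▸ hpb) (lt_irrefl p)
    · exact h1
  refine ⟨b, ⟨hfbA, fun x hx hbx => ?_⟩, ⟨hq.1.1, hfbA, hpb, fun x hx hpx hxb => ?_⟩⟩
  · -- maximality of b in f ⁻¹' A
    have hfx : f x = q' := hq'max.2 (f x) hx (hfb' ▸ hf hbx)
    exact hbmax.2 x (by rw [Set.mem_preimage, hfx]; exact le_refl q') hbx
  · -- cover in f ⁻¹' A
    have : x ∈ f ⁻¹' {y | y ≤ q'} := by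
      rw [Set.mem_preimage]; exact hfb' ▸ hf hxb.le
    exact hbcov.2.2.2 x this hpx hxb

lemma constructible_preimage [Finite P] [Finite Q] {f : P → Q} (hf : Monotone f)
    (hfc : IsConstructibleMap f) {S : Set Q} (hS : PosetConstructible S)
    (hdc : ∀ x s, s ∈ S → x ≤ s → x ∈ S) : PosetConstructible (f ⁻¹' S) := by
  induction hS with
  | @cone A g hg hgreatest =>
    have : A = {y | y ≤ g} := by
      ext y
      exact ⟨fun hy => hgreatest y hy, fun hy => hdc y g hg hy⟩
    rw [this]
    exact hfc.2 g
  | @step A B hQA hRB hcA hcB cA cB cAB ihA ihB ihAB =>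
    have hdcA : ∀ x s, s ∈ A → x ≤ s → x ∈ A := fun x s hs hxs =>
      hQA.2 s hs x (hdc x s (Or.inl hs) hxs) hxs
    have hdcB : ∀ x s, s ∈ B → x ≤ s → x ∈ B := fun x s hs hxs =>
      hRB.2 s hs x (hdc x s (Or.inr hs) hxs) hxs
    have hdcAB : ∀ x s, s ∈ A ∩ B → x ≤ s → x ∈ A ∩ B := fun x s hs hxs =>
      ⟨hdcA x s hs.1 hxs, hdcB x s hs.2 hxs⟩
    rw [Set.preimage_union]
    refine PosetConstructible.step ?_ ?_ ?_ ?_ (ihA hdcA) (ihB hdcB) ?_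
    · exact ⟨Set.subset_union_left, fun a ha x _ hxa =>
        Set.mem_preimage.mpr (hdcA (f x) (f a) ha (hf hxa))⟩
    · exact ⟨Set.subset_union_right, fun a ha x _ hxa =>
        Set.mem_preimage.mpr (hdcB (f x) (f a) ha (hf hxa))⟩
    · exact codim_pullback hf hfc.1 hdcA hdcB hcA
    · rw [Set.inter_comm]
      exact codim_pullback hf hfc.1 hdcB hdcA (by rwa [Set.inter_comm] at hcB)
    · rw [← Set.preimage_inter]
      exact ihAB hdcAB

end Aux

/-- If `f : P → Q` is a constructible map and `Q` is a constructible poset,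
then `P` is a constructible poset. -/
theorem constructible_map_total {P Q : Type*} [PartialOrder P] [PartialOrder Q]
    [Finite P] [Finite Q] (f : P → Q) (hf : Monotone f)
    (hfc : IsConstructibleMap f) (hQ : PosetConstructible (Set.univ : Set Q)) :
    PosetConstructible (Set.univ : Set P) := by
  have := constructible_preimage hf hfc hQ (fun x s _ _ => trivial)
  simpa using this
end

section
/- The composition of constructible maps is constructible: if f : P → Q and g : Q → R are constructible maps of finite posets, then g ∘ f : P → R is a constructible map. -/
/-!
A filtration map `f` reflects the codimension-one condition along lower sets: if `a` is maximal
in `f⁻¹ U`, then `f a` is maximal in `U` (an element above `f a` in `U` would, by the filtration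
property at it, produce an element of `f⁻¹ U` covering `a`). If `v` covers `f a` in `V`, then `a`
is maximal in `f⁻¹(⌊v⌋ \ {v})`, and the filtration property at `v` yields an element `b` over `v`
covering `a`, which is the required maximal element of `f⁻¹ V`. Constructibility of `f⁻¹ T` for
a constructible lower set `T` then follows by induction on `T`: cones pull back to the
constructible fibres `f⁻¹⌊q⌋`, and decompositions pull back to decompositions. Applied to
`T = g⁻¹⌊r⌋` this gives the theorem.
-/

section

variable {P Q : Type*} [PartialOrder P] [PartialOrder Q]

theorem IsLowerSet.isClosedSubposet {A B : Set P} (hA : IsLowerSet A) (hAB : A ⊆ B) :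
    IsClosedSubposet B A :=
  ⟨hAB, fun _ ha _ _ hxa => hA hxa ha⟩

theorem IsClosedSubposet.isLowerSet {A B : Set P} (h : IsClosedSubposet B A)
    (hB : IsLowerSet B) : IsLowerSet A :=
  fun a x hxa ha => h.2 a ha x (hB hxa (h.1 ha)) hxa

theorem IsLowerSet.eq_Iic_of_isGreatest {A : Set P} {g : P} (hA : IsLowerSet A)
    (hg : IsGreatest A g) : A = Set.Iic g :=
  Set.ext fun _ => ⟨fun hx => hg.2 hx, fun hx => hA hx hg.1⟩

theorem IsMaxIn.preimage_Iio {f : P → Q} (hf : Monotone f) {U : Set Q} {a : P} {u : Q}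
    (ha : IsMaxIn (f ⁻¹' U) a) (hau : f a < u) (hU : ∀ y, f a ≤ y → y < u → y ∈ U) :
    IsMaxIn (f ⁻¹' Set.Iio u) a :=
  ⟨hau, fun x hx hax => ha.2 x (hU _ (hf hax) hx) hax⟩

namespace IsFiltrationMap

variable {f : P → Q}

theorem exists_covers_of_isMaxIn (hfil : IsFiltrationMap f) {a : P} {u : Q}
    (ha : IsMaxIn (f ⁻¹' Set.Iio u) a) :
    ∃ b, IsMaxIn (f ⁻¹' Set.Iic u) b ∧ CoversIn (f ⁻¹' Set.Iic u) a b ∧ f b = u := by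
  obtain ⟨b, hb, hab⟩ := hfil u a ha
  refine ⟨b, hb, hab, (hb.1 : f b ≤ u).eq_of_not_lt fun hbu => ?_⟩
  exact hab.2.2.1.ne (ha.2 b hbu hab.2.2.1.le).symm

theorem isMaxIn_apply (hfil : IsFiltrationMap f) (hf : Monotone f) {U : Set Q}
    (hU : IsLowerSet U) {a : P} (ha : IsMaxIn (f ⁻¹' U) a) : IsMaxIn U (f a) := by
  refine ⟨ha.1, fun u hu hau => (hau.lt_or_eq.resolve_left fun hlt => ?_).symm⟩
  obtain ⟨b, -, hab, hbu⟩ :=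
    hfil.exists_covers_of_isMaxIn (ha.preimage_Iio hf hlt fun y _ hyu => hU hyu.le hu)
  have hbU : f b ∈ U := hbu ▸ hu
  exact hab.2.2.1.ne (ha.2 b hbU hab.2.2.1.le).symm

theorem codimOneIn_preimage (hfil : IsFiltrationMap f) (hf : Monotone f) {U V : Set Q}
    (hU : IsLowerSet U) (hV : IsLowerSet V) (hUV : CodimOneIn U V) :
    CodimOneIn (f ⁻¹' U) (f ⁻¹' V) := by
  intro a ha
  obtain ⟨v, hv, hav⟩ := hUV (f a) (hfil.isMaxIn_apply hf hU ha)
  have ha_below : IsMaxIn (f ⁻¹' Set.Iio v) a := by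
    refine ha.preimage_Iio hf hav.2.2.1 fun y hay hyv => ?_
    rcases hay.lt_or_eq with hay | rfl
    · exact absurd hyv (hav.2.2.2 y (hV hyv.le hv.1) hay)
    · exact ha.1
  obtain ⟨b, hb, hab, rfl⟩ := hfil.exists_covers_of_isMaxIn ha_below
  refine ⟨b, ⟨hv.1, fun x hx hbx => hb.2 x ?_ hbx⟩, ⟨hav.1, hv.1, hab.2.2.1, ?_⟩⟩
  · exact (hv.2 (f x) hx (hf hbx)).le
  · exact fun x _ hax hxb => hab.2.2.2 x (hf hxb.le) hax hxb

end IsFiltrationMap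

theorem PosetConstructible.preimage {f : P → Q} (hf : Monotone f) (hfc : IsConstructibleMap f)
    {T : Set Q} (hT : PosetConstructible T) (hTl : IsLowerSet T) :
    PosetConstructible (f ⁻¹' T) := by
  induction hT with
  | cone hg hgreatest =>
    rw [hTl.eq_Iic_of_isGreatest ⟨hg, hgreatest⟩]
    exact hfc.2 _
  | @step A B hA hB hcA hcB _ _ _ ihA ihB ihAB =>
    have hAl : IsLowerSet A := hA.isLowerSet hTl
    have hBl : IsLowerSet B := hB.isLowerSet hTl
    have hABl : IsLowerSet (A ∩ B) := hAl.inter hBl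
    rw [Set.preimage_union]
    refine .step ((hAl.preimage hf).isClosedSubposet Set.subset_union_left)
      ((hBl.preimage hf).isClosedSubposet Set.subset_union_right) ?_ ?_ (ihA hAl) (ihB hBl) ?_
    · exact hfc.1.codimOneIn_preimage hf hABl hAl hcA
    · exact hfc.1.codimOneIn_preimage hf hABl hBl hcB
    · exact ihAB hABl

end

theorem constructible_map_composition_general {P Q R : Type*}
    [PartialOrder P] [PartialOrder Q] [PartialOrder R]
    (f : P → Q) (g : Q → R) (hf : Monotone f) (hg : Monotone g)
    (hfc : IsConstructibleMap f) (hgc : IsConstructibleMap g) :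
    IsConstructibleMap (g ∘ f) :=
  ⟨fun r => hfc.1.codimOneIn_preimage hf ((isLowerSet_Iio r).preimage hg)
      ((isLowerSet_Iic r).preimage hg) (hgc.1 r),
    fun r => (hgc.2 r).preimage hf hfc ((isLowerSet_Iic r).preimage hg)⟩

/-- The composition of constructible maps is a constructible map. -/
theorem constructible_map_composition {P Q R : Type*}
    [PartialOrder P] [PartialOrder Q] [PartialOrder R] [Finite P] [Finite Q] [Finite R]
    (f : P → Q) (g : Q → R) (hf : Monotone f) (hg : Monotone g)
    (hfc : IsConstructibleMap f) (hgc : IsConstructibleMap g) :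
    IsConstructibleMap (g ∘ f) :=
  constructible_map_composition_general f g hf hg hfc hgc
end

section
/- If a finite abstract simplicial complex K edge-zips onto a finite abstract simplicial complex L, then the face poset of K zips onto the face poset of L. -/
universe u

/-- Image of a finite simplex under a vertex map (classical decidable equality). -/
noncomputable def fimage {V W : Type u} (φ : V → W) (σ : Finset V) : Finset W :=
  letI := Classical.decEq W
  σ.image φ

/-- The two-element finite set `{v, w}` (classical decidable equality). -/
noncomputable def pairFinset {V : Type u} (v w : V) : Finset V :=
  letI := Classical.decEq V
  {v, w}

/-- Union of finite sets (classical decidable equality). -/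
noncomputable def funion {V : Type u} (σ τ : Finset V) : Finset V :=
  letI := Classical.decEq V
  σ ∪ τ

/-- A finite abstract simplicial complex: a finite set of nonempty finite subsets of
the vertex set, closed under passing to nonempty subsets. -/
def IsComplex {V : Type u} (K : Set (Finset V)) : Prop :=
  K.Finite ∧ (∀ σ ∈ K, σ.Nonempty) ∧
    ∀ σ ∈ K, ∀ τ : Finset V, τ ⊆ σ → τ.Nonempty → τ ∈ K

/-- The link `lk(σ, K) = {τ ∈ K : τ ∩ σ = ∅ ∧ τ ∪ σ ∈ K}`. -/
def simplicialLink {V : Type u} (K : Set (Finset V)) (σ : Finset V) :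
    Set (Finset V) :=
  {τ | τ ∈ K ∧ Disjoint τ σ ∧ funion τ σ ∈ K}

/-- The simplicial map `K → L` induced by the vertex map `φ`, contracting the edge
`{v, w}`, is an elementary edge-zipping. -/
def IsElemEdgeZip {V W : Type u} (K : Set (Finset V)) (L : Set (Finset W))
    (φ : V → W) (v w : V) : Prop :=
  IsComplex K ∧ IsComplex L ∧
  v ≠ w ∧ φ v = φ w ∧
  (∀ x y : V, φ x = φ y → x = y ∨ (x = v ∧ y = w) ∨ (x = w ∧ y = v)) ∧
  pairFinset v w ∈ K ∧
  (∀ σ ∈ K, fimage φ σ ∈ L) ∧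
  L = fimage φ '' K ∧
  simplicialLink K {v} ∩ simplicialLink K {w} = simplicialLink K (pairFinset v w)

/-- `K` edge-zips onto `L`: a finite sequence of elementary edge-zippings
`K = K₀ → K₁ → ⋯ → Kₙ = L`. -/
inductive EdgeZips : ∀ (V : Type u), Set (Finset V) → ∀ (W : Type u), Set (Finset W) →
    Prop where
  | refl (V : Type u) (K : Set (Finset V)) : EdgeZips V K V K
  | step {V W X : Type u} {K : Set (Finset V)} {L : Set (Finset W)} {M : Set (Finset X)}
      (hKL : EdgeZips V K W L) (φ : W → X) (v w : W)
      (h : IsElemEdgeZip L M φ v w) : EdgeZips V K X M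

/-- `f : α → β` is the elementary zipping of `α` along `p`, where `p` covers the two
incomparable elements `q` and `r`. -/
def IsElementaryZipping {α β : Type u} [PartialOrder α] [PartialOrder β]
    (f : α → β) (p q r : α) : Prop :=
  ¬q ≤ r ∧ ¬r ≤ q ∧ q ⋖ p ∧ r ⋖ p ∧
  (∀ s : α, s < p → s ≠ q → s ≠ r → s < q ∧ s < r) ∧
  (∀ s : α, q < s → r < s → p ≤ s) ∧
  Monotone f ∧ Function.Surjective f ∧
  (∀ x y : α, f x = f y ↔ x = y ∨ (x ∈ ({p, q, r} : Set α) ∧ y ∈ ({p, q, r} : Set α))) ∧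
  (∀ x y : α, x ∉ ({p, q, r} : Set α) → y ∉ ({p, q, r} : Set α) → (f x ≤ f y ↔ x ≤ y)) ∧
  (∀ x : α, x ∉ ({p, q, r} : Set α) → (f x ≤ f p ↔ x ≤ p ∨ x ≤ q ∨ x ≤ r)) ∧
  (∀ y : α, y ∉ ({p, q, r} : Set α) → (f p ≤ f y ↔ p ≤ y ∨ q ≤ y ∨ r ≤ y))

/-- `ZipSeq α β f` holds when `f` is the composite of a finite sequence of elementary
zippings `α = P₀ → P₁ → ⋯ → Pₙ = β`. -/
inductive ZipSeq : ∀ (α : Type u) [PartialOrder α] (β : Type u) [PartialOrder β],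
    (α → β) → Prop where
  | refl (α : Type u) [PartialOrder α] : ZipSeq α α id
  | step {α β γ : Type u} [PartialOrder α] [PartialOrder β] [PartialOrder γ]
      {g : α → β} {h : β → γ} (p q r : β)
      (hg : ZipSeq α β g) (hh : IsElementaryZipping h p q r) : ZipSeq α γ (h ∘ g)

/-- A poset `α` zips onto a poset `β` if some finite sequence of elementary zippings
starting at `α` ends at a poset order-isomorphic to `β`. -/
def ZipsOnto (α : Type u) [PartialOrder α] (β : Type u) [PartialOrder β] : Prop :=
  ∃ (γ : Type u) (_ : PartialOrder γ) (f : α → γ), ZipSeq α γ f ∧ Nonempty (γ ≃o β)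

/-! An elementary edge-zipping `φ : K → L` contracting the edge `{v, w}` identifies, for each
face `p ⊇ {v, w}`, the three faces `p`, `p \ {w}`, `p \ {v}`; the link condition says that no
other faces are identified (a fibre never consists of just `ρ ∪ {v}` and `ρ ∪ {w}`). Record a
face `σ` by the pair `(φ σ, σ ∩ {v, w})` and order pairs componentwise; this is the face poset of
`K`. Now zip the faces `p ⊇ {v, w}` one at a time, in order of increasing size, by erasing the
second coordinate over `φ p`: each step glues the covering pair `(φ p, {v}), (φ p, {w}) ⋖
(φ p, {v, w})` to a point, which is an elementary zipping because everything strictly below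
`φ p` is already zipped and everything above `φ p` still remembers a vertex of the edge. Once
all of them are zipped, the link condition makes the first projection an order isomorphism onto
the face poset of `L`. -/

open Finset

section Zipping

variable {α β γ : Type u} [PartialOrder α] [PartialOrder β] [PartialOrder γ]

theorem IsElementaryZipping.comp_orderIso {f : β → γ} {p q r : β}
    (hf : IsElementaryZipping f p q r) (e : α ≃o β) :
    IsElementaryZipping (f ∘ e) (e.symm p) (e.symm q) (e.symm r) := by
  obtain ⟨hqr, hrq, hqp, hrp, hbelow, habove, hmono, hsurj, heq, hle, hle_p, hp_le⟩ := hf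
  have hmem : ∀ x : α, x ∈ ({e.symm p, e.symm q, e.symm r} : Set α) ↔
      e x ∈ ({p, q, r} : Set β) := by
    simp [e.eq_symm_apply]
  refine ⟨by simpa using hqr, by simpa using hrq, by simpa using hqp, by simpa using hrp,
    fun s hs hsq hsr => ?_, fun s hsq hsr => ?_, hmono.comp e.monotone,
    hsurj.comp e.surjective, fun x y => ?_, fun x y hx hy => ?_, fun x hx => ?_,
    fun y hy => ?_⟩
  · simpa [e.lt_symm_apply] using
      hbelow (e s) (by simpa [e.lt_symm_apply] using hs) (by simpa [e.eq_symm_apply] using hsq)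
        (by simpa [e.eq_symm_apply] using hsr)
  · simpa [e.symm_apply_le] using
      habove (e s) (by simpa [e.symm_apply_lt] using hsq) (by simpa [e.symm_apply_lt] using hsr)
  · simpa [hmem] using heq (e x) (e y)
  · rw [hmem] at hx hy
    simpa using hle (e x) (e y) hx hy
  · rw [hmem] at hx
    simpa [e.le_symm_apply] using hle_p (e x) hx
  · rw [hmem] at hy
    simpa [e.symm_apply_le] using hp_le (e y) hy

namespace ZipsOnto

theorem of_orderIso (e : α ≃o β) : ZipsOnto α β :=
  ⟨α, inferInstance, id, .refl α, ⟨e⟩⟩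

theorem trans_orderIso (h : ZipsOnto α β) (e : β ≃o γ) : ZipsOnto α γ := by
  obtain ⟨δ, _, f, hf, ⟨e'⟩⟩ := h
  exact ⟨δ, _, f, hf, ⟨e'.trans e⟩⟩

theorem trans_isElementaryZipping (h : ZipsOnto α β) {f : β → γ} {p q r : β}
    (hf : IsElementaryZipping f p q r) : ZipsOnto α γ := by
  obtain ⟨δ, _, g, hg, ⟨e⟩⟩ := h
  exact ⟨γ, _, (f ∘ e) ∘ g, .step _ _ _ hg (hf.comp_orderIso e), ⟨.refl γ⟩⟩

theorem trans_zipSeq (h : ZipsOnto α β) {g : β → γ} (hg : ZipSeq β γ g) : ZipsOnto α γ := by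
  induction hg with
  | refl => exact h
  | step _ _ _ _ hf ih => exact (ih h).trans_isElementaryZipping hf

theorem trans (h₁ : ZipsOnto α β) (h₂ : ZipsOnto β γ) : ZipsOnto α γ := by
  obtain ⟨δ, _, g, hg, ⟨e⟩⟩ := h₂
  exact (h₁.trans_zipSeq hg).trans_orderIso e

end ZipsOnto

end Zipping

theorem Finset.Nonempty.subset_pair_iff_eq {V : Type u} [DecidableEq V] {s : Finset V}
    {a b : V} (hs : s.Nonempty) : s ⊆ {a, b} ↔ s = {a} ∨ s = {b} ∨ s = {a, b} := by
  rw [← coe_subset, coe_pair, (coe_nonempty.mpr hs).subset_pair_iff_eq]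
  norm_cast

section Collapse

variable {α V : Type u} {S : Set (α × Finset V)} {t : α} {v w : V}

theorem lt_mk_of_fst_lt [Preorder α] (hlt : ∀ x ∈ S, x.1 < t → x.2 = ∅) {x : α × Finset V}
    (hx : x ∈ S) (h : x.1 < t) (m : Finset V) : x < (t, m) := by
  obtain ⟨a, n⟩ := x
  obtain rfl : n = ∅ := hlt _ hx h
  exact Prod.mk_lt_mk_of_lt_of_le h (empty_subset m)

theorem mk_singleton_covBy_mk_pair [PartialOrder α] [DecidableEq V] (t : α) {a b : V}
    (hab : a ≠ b) : ((t, {a}) : α × Finset V) ⋖ (t, {a, b}) := by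
  rw [Prod.mk_covBy_mk_iff_right, pair_comm]
  exact covBy_insert (by simpa using hab.symm)

theorem fst_eq_iff_of_mem [PartialOrder α] [DecidableEq V] (hsub : ∀ x ∈ S, x.2 ⊆ {v, w})
    (hle : ∀ x ∈ S, t ≤ x.1 → x.2.Nonempty) {x : α × Finset V} (hx : x ∈ S) :
    x.1 = t ↔ x = (t, {v, w}) ∨ x = (t, {v}) ∨ x = (t, {w}) := by
  refine ⟨fun h => ?_, by rintro (rfl | rfl | rfl) <;> rfl⟩
  have := ((hle x hx h.ge).subset_pair_iff_eq).mp (hsub x hx)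
  obtain ⟨a, m⟩ := x
  obtain rfl : a = t := h
  simp only [Prod.mk.injEq, true_and]
  tauto

theorem le_mk_empty_iff [PartialOrder α] [DecidableEq V] (hsub : ∀ x ∈ S, x.2 ⊆ {v, w})
    (hlt : ∀ x ∈ S, x.1 < t → x.2 = ∅) {x : α × Finset V} (hx : x ∈ S) (hxt : x.1 ≠ t) :
    x ≤ (t, ∅) ↔ x ≤ (t, {v, w}) ∨ x ≤ (t, {v}) ∨ x ≤ (t, {w}) := by
  obtain ⟨a, m⟩ := x
  simp only [Prod.mk_le_mk]
  constructor
  · rintro ⟨hat, -⟩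
    exact Or.inl ⟨hat, hsub _ hx⟩
  · rintro (⟨hat, -⟩ | ⟨hat, -⟩ | ⟨hat, -⟩) <;>
      exact ⟨hat, (hlt _ hx (lt_of_le_of_ne hat hxt)).le⟩

theorem mk_empty_le_iff [PartialOrder α] [DecidableEq V] (hsub : ∀ x ∈ S, x.2 ⊆ {v, w})
    (hle : ∀ x ∈ S, t ≤ x.1 → x.2.Nonempty) {x : α × Finset V} (hx : x ∈ S) :
    (t, ∅) ≤ x ↔ (t, {v, w}) ≤ x ∨ (t, {v}) ≤ x ∨ (t, {w}) ≤ x := by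
  obtain ⟨a, m⟩ := x
  simp only [Prod.mk_le_mk]
  constructor
  · rintro ⟨hta, -⟩
    obtain ⟨z, hz⟩ := hle _ hx hta
    rcases mem_insert.mp (hsub _ hx hz) with rfl | hzw
    · exact Or.inr (Or.inl ⟨hta, singleton_subset_iff.mpr hz⟩)
    · rw [mem_singleton.mp hzw] at hz
      exact Or.inr (Or.inr ⟨hta, singleton_subset_iff.mpr hz⟩)
  · rintro (⟨hta, -⟩ | ⟨hta, -⟩ | ⟨hta, -⟩) <;> exact ⟨hta, empty_subset _⟩

variable [DecidableEq α]

def collapse (t : α) (x : α × Finset V) : α × Finset V :=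
  (x.1, if x.1 = t then ∅ else x.2)

theorem collapse_of_fst_eq {x : α × Finset V} (h : x.1 = t) : collapse t x = (t, ∅) := by
  simp [collapse, h]

theorem collapse_of_fst_ne {x : α × Finset V} (h : x.1 ≠ t) : collapse t x = x := by
  simp [collapse, h]

@[simp]
theorem collapse_mk_self (t : α) (m : Finset V) : collapse t (t, m) = (t, ∅) :=
  collapse_of_fst_eq rfl

theorem collapse_eq_collapse_iff {x y : α × Finset V} :
    collapse t x = collapse t y ↔ x = y ∨ (x.1 = t ∧ y.1 = t) := by
  obtain ⟨a, m⟩ := x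
  obtain ⟨b, n⟩ := y
  unfold collapse
  split_ifs <;> grind

variable [PartialOrder α]

theorem collapse_le_collapse (hlt : ∀ x ∈ S, x.1 < t → x.2 = ∅) {x y : α × Finset V}
    (hx : x ∈ S) (hxy : x ≤ y) : collapse t x ≤ collapse t y := by
  obtain ⟨a, m⟩ := x
  obtain ⟨b, n⟩ := y
  obtain ⟨hab, hmn⟩ := Prod.mk_le_mk.mp hxy
  refine Prod.mk_le_mk.mpr ⟨hab, ?_⟩
  by_cases ha : a = t
  · rw [if_pos ha]
    exact empty_subset _
  rw [if_neg ha]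
  by_cases hb : b = t
  · rw [if_pos hb, hlt _ hx (lt_of_le_of_ne (hb ▸ hab) ha)]
  · rw [if_neg hb]
    exact hmn

theorem isElementaryZipping_collapse [DecidableEq V] (hvw : v ≠ w)
    (hP : (t, {v, w}) ∈ S) (hQ : (t, {v}) ∈ S) (hR : (t, {w}) ∈ S)
    (hsub : ∀ x ∈ S, x.2 ⊆ {v, w}) (hlt : ∀ x ∈ S, x.1 < t → x.2 = ∅)
    (hle : ∀ x ∈ S, t ≤ x.1 → x.2.Nonempty) :
    IsElementaryZipping (S.imageFactorization (collapse t)) ⟨_, hP⟩ ⟨_, hQ⟩ ⟨_, hR⟩ := by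
  have hfiber (x : S) : x ∈ ({⟨_, hP⟩, ⟨_, hQ⟩, ⟨_, hR⟩} : Set S) ↔ x.1.1 = t := by
    rw [fst_eq_iff_of_mem hsub hle x.2]
    simp [Subtype.ext_iff]
  have hf (x : S) : (S.imageFactorization (collapse t) x : α × Finset V) = collapse t x := rfl
  refine ⟨?qr, ?rq, ?qp, ?rp, ?below, ?above, fun x y hxy => collapse_le_collapse hlt x.2 hxy,
    Set.imageFactorization_surjective, ?eq, ?le, ?le_p, ?p_le⟩
  · simp [← Subtype.coe_le_coe, hvw]
  · simp [← Subtype.coe_le_coe, hvw.symm]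
  · exact CovBy.of_image (OrderEmbedding.subtype S) (mk_singleton_covBy_mk_pair t hvw)
  · refine CovBy.of_image (OrderEmbedding.subtype S) ?_
    show ((t, {w}) : α × Finset V) ⋖ (t, {v, w})
    rw [pair_comm]
    exact mk_singleton_covBy_mk_pair t hvw.symm
  · intro s hs hsq hsr
    have hst : s.1.1 < t := hs.le.1.lt_of_ne fun h => by
      rcases (hfiber s).2 h with h | h | h
      exacts [hs.ne h, hsq h, hsr h]
    exact ⟨lt_mk_of_fst_lt hlt s.2 hst _, lt_mk_of_fst_lt hlt s.2 hst _⟩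
  · intro s hq hr
    exact Prod.mk_le_mk.mpr ⟨hq.le.1, insert_subset (singleton_subset_iff.mp hq.le.2) hr.le.2⟩
  · intro x y
    rw [hfiber, hfiber, Subtype.ext_iff, Subtype.ext_iff, hf, hf, collapse_eq_collapse_iff]
  · intro x y hx hy
    rw [hfiber] at hx hy
    rw [← Subtype.coe_le_coe, ← Subtype.coe_le_coe, hf, hf, collapse_of_fst_ne hx,
      collapse_of_fst_ne hy]
  · intro x hx
    rw [hfiber] at hx
    simpa [← Subtype.coe_le_coe, hf, collapse_of_fst_ne hx] using le_mk_empty_iff hsub hlt x.2 hx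
  · intro y hy
    rw [hfiber] at hy
    simpa [← Subtype.coe_le_coe, hf, collapse_of_fst_ne hy] using mk_empty_le_iff hsub hle y.2

end Collapse

section Classical

variable {V W : Type u}

theorem fimage_eq_image [DecidableEq W] (φ : V → W) : fimage φ = fun σ => σ.image φ := by
  funext σ
  unfold fimage
  convert rfl

theorem pairFinset_eq [DecidableEq V] (v w : V) : pairFinset v w = {v, w} := by
  unfold pairFinset
  convert rfl

theorem funion_eq [DecidableEq V] (σ τ : Finset V) : funion σ τ = σ ∪ τ := by
  unfold funion
  convert rfl

end Classical

structure IdentifiesExactly {V W : Type u} (φ : V → W) (v w : V) : Prop where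
  map_eq : φ v = φ w
  eq_of_map_eq : ∀ x y, φ x = φ y → x = y ∨ (x = v ∧ y = w) ∨ (x = w ∧ y = v)

namespace IdentifiesExactly

variable {V W : Type u} {φ : V → W} {v w : V}

theorem symm (hφ : IdentifiesExactly φ v w) : IdentifiesExactly φ w v :=
  ⟨hφ.map_eq.symm, fun x y h => by have := hφ.eq_of_map_eq x y h; tauto⟩

variable [DecidableEq W]

theorem mem_of_map_mem (hφ : IdentifiesExactly φ v w) {x : V} {τ : Finset V} (hxv : x ≠ v)
    (hxw : x ≠ w) (h : φ x ∈ τ.image φ) : x ∈ τ := by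
  obtain ⟨y, hy, hyx⟩ := mem_image.mp h
  rcases hφ.eq_of_map_eq y x hyx with rfl | ⟨-, rfl⟩ | ⟨-, rfl⟩
  exacts [hy, absurd rfl hxw, absurd rfl hxv]

theorem mem_or_mem_of_map_mem (hφ : IdentifiesExactly φ v w) {τ : Finset V}
    (h : φ v ∈ τ.image φ) : v ∈ τ ∨ w ∈ τ := by
  obtain ⟨y, hy, hyv⟩ := mem_image.mp h
  rcases hφ.eq_of_map_eq y v hyv with rfl | ⟨rfl, -⟩ | ⟨rfl, -⟩
  exacts [Or.inl hy, Or.inl hy, Or.inr hy]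

theorem subset_of_image_subset (hφ : IdentifiesExactly φ v w) {σ τ : Finset V}
    (h : σ.image φ ⊆ τ.image φ) (hv : v ∈ τ) (hw : w ∈ τ) : σ ⊆ τ := by
  intro x hx
  by_cases hxv : x = v
  · exact hxv ▸ hv
  by_cases hxw : x = w
  · exact hxw ▸ hw
  exact hφ.mem_of_map_mem hxv hxw (h (mem_image_of_mem φ hx))

variable [DecidableEq V]

theorem image_insert_insert (hφ : IdentifiesExactly φ v w) {σ : Finset V}
    (h : v ∈ σ ∨ w ∈ σ) : (insert v (insert w σ)).image φ = σ.image φ := by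
  have hv : φ v ∈ σ.image φ := by
    rcases h with h | h
    · exact mem_image_of_mem φ h
    · exact hφ.map_eq ▸ mem_image_of_mem φ h
  rw [image_insert, image_insert, ← hφ.map_eq, insert_eq_of_mem (mem_insert_self _ _),
    insert_eq_of_mem hv]

theorem image_subset_image_and_inter_subset_iff (hφ : IdentifiesExactly φ v w)
    {σ τ : Finset V} : σ.image φ ⊆ τ.image φ ∧ σ ∩ {v, w} ⊆ τ ∩ {v, w} ↔ σ ⊆ τ := by
  refine ⟨fun ⟨himg, hvw⟩ x hx => ?_, fun h => ⟨image_subset_image h, inter_subset_inter_right h⟩⟩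
  by_cases hx' : x ∈ ({v, w} : Finset V)
  · exact inter_subset_left (hvw (mem_inter.mpr ⟨hx, hx'⟩))
  · rw [mem_insert, mem_singleton, not_or] at hx'
    exact hφ.mem_of_map_mem hx'.1 hx'.2 (himg (mem_image_of_mem φ hx))

end IdentifiesExactly

section Link

variable {V : Type u} [DecidableEq V]

/-- For a complex containing the edge `{v, w}` this is equivalent to
`lk {v} ∩ lk {w} = lk {v, w}`. -/
def EdgeLinkCondition (K : Set (Finset V)) (v w : V) : Prop :=
  ∀ ρ : Finset V, insert v ρ ∈ K → insert w ρ ∈ K → insert v (insert w ρ) ∈ K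

theorem EdgeLinkCondition.symm {K : Set (Finset V)} {v w : V} (h : EdgeLinkCondition K v w) :
    EdgeLinkCondition K w v :=
  fun ρ hw hv => insert_comm v w ρ ▸ h ρ hv hw

theorem edgeLinkCondition_of_link {K : Set (Finset V)} {v w : V} (hK : IsComplex K)
    (hpair : pairFinset v w ∈ K)
    (hlink : simplicialLink K {v} ∩ simplicialLink K {w} = simplicialLink K (pairFinset v w)) :
    EdgeLinkCondition K v w := by
  intro ρ hv hw
  by_cases hvρ : v ∈ ρ
  · rwa [insert_comm, insert_eq_of_mem hvρ]
  by_cases hwρ : w ∈ ρ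
  · rwa [insert_eq_of_mem hwρ]
  rcases ρ.eq_empty_or_nonempty with rfl | hρ
  · rwa [insert_empty, ← pairFinset_eq]
  have hmem {x : V} (hx : x ∉ ρ) (h : insert x ρ ∈ K) : ρ ∈ simplicialLink K {x} :=
    ⟨hK.2.2 _ h ρ (subset_insert _ _) hρ, disjoint_singleton_right.mpr hx,
      by rwa [funion_eq, union_comm, ← insert_eq]⟩
  have := (hlink ▸ ⟨hmem hvρ hv, hmem hwρ hw⟩ : ρ ∈ simplicialLink K (pairFinset v w)).2.2
  rwa [funion_eq, pairFinset_eq, union_comm, insert_union, ← insert_eq] at this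

end Link

section Stages

variable {V W : Type u} [DecidableEq W] {K : Set (Finset V)} {φ : V → W} {v w : V}
  {B : Finset (Finset W)} {p σ σ' : Finset V}

def edgeStar (K : Set (Finset V)) (v w : V) : Set (Finset V) := {σ | σ ∈ K ∧ v ∈ σ ∧ w ∈ σ}

/-- The faces of `L` whose fibres have already been zipped. -/
structure IsLowerStarImage (K : Set (Finset V)) (φ : V → W) (v w : V)
    (B : Finset (Finset W)) : Prop where
  exists_preimage : ∀ τ ∈ B, ∃ p ∈ edgeStar K v w, p.image φ = τ
  mem_of_subset : ∀ p ∈ edgeStar K v w, ∀ τ ∈ B, p.image φ ⊆ τ → p.image φ ∈ B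

theorem IsLowerStarImage.of_insert {t : Finset W} (hB : IsLowerStarImage K φ v w (insert t B))
    (hmax : ∀ τ ∈ B, ¬ t ⊆ τ) : IsLowerStarImage K φ v w B where
  exists_preimage τ hτ := hB.exists_preimage τ (mem_insert_of_mem hτ)
  mem_of_subset p hp τ hτ hpτ := by
    refine (mem_insert.mp (hB.mem_of_subset p hp τ (mem_insert_of_mem hτ) hpτ)).resolve_left ?_
    rintro rfl
    exact hmax τ hτ hpτ

variable [DecidableEq V]

/-- The face `σ` in the poset obtained from the face poset of `K` by zipping the fibres over
`B`: its image in `L`, together with its trace on the edge, which is forgotten once the image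
lies in `B`. -/
def zipKey (φ : V → W) (v w : V) (B : Finset (Finset W)) (σ : Finset V) :
    Finset W × Finset V :=
  (σ.image φ, if σ.image φ ∈ B then ∅ else σ ∩ {v, w})

def zipStage (K : Set (Finset V)) (φ : V → W) (v w : V) (B : Finset (Finset W)) :
    Set (Finset W × Finset V) :=
  zipKey φ v w B '' K

theorem zipKey_of_mem (h : σ.image φ ∈ B) : zipKey φ v w B σ = (σ.image φ, ∅) := by
  simp [zipKey, h]

theorem zipKey_of_notMem (h : σ.image φ ∉ B) :
    zipKey φ v w B σ = (σ.image φ, σ ∩ {v, w}) := by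
  simp [zipKey, h]

theorem zipKey_snd_subset : (zipKey φ v w B σ).2 ⊆ {v, w} := by
  unfold zipKey
  split_ifs
  exacts [empty_subset _, inter_subset_right]

theorem collapse_zipKey (t : Finset W) :
    collapse t (zipKey φ v w B σ) = zipKey φ v w (insert t B) σ := by
  by_cases h : σ.image φ = t <;> simp [zipKey, collapse, h]

theorem image_collapse_zipStage (t : Finset W) :
    collapse t '' zipStage K φ v w B = zipStage K φ v w (insert t B) := by
  simp only [zipStage, Set.image_image, collapse_zipKey]

noncomputable def orderIsoZipStageEmpty (hφ : IdentifiesExactly φ v w) :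
    K ≃o zipStage K φ v w ∅ :=
  OrderIso.ofSurjective
    (OrderEmbedding.ofMapLEIff (fun σ : K => ⟨zipKey φ v w ∅ σ, σ, σ.2, rfl⟩) fun σ τ => by
      simpa [← Subtype.coe_le_coe, zipKey_of_notMem (notMem_empty _), Prod.mk_le_mk] using
        hφ.image_subset_image_and_inter_subset_iff)
    (by rintro ⟨_, σ, hσ, rfl⟩; exact ⟨⟨σ, hσ⟩, rfl⟩)

theorem zipKey_snd_nonempty (hφ : IdentifiesExactly φ v w) (hvp : v ∈ p)
    (hmax : ∀ τ ∈ B, ¬ p.image φ ⊆ τ) (hσ : p.image φ ⊆ σ.image φ) :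
    (zipKey φ v w B σ).2.Nonempty := by
  rw [zipKey_of_notMem fun h => hmax _ h hσ]
  rcases hφ.mem_or_mem_of_map_mem (hσ (mem_image_of_mem φ hvp)) with h | h
  · exact ⟨v, mem_inter.mpr ⟨h, mem_insert_self _ _⟩⟩
  · exact ⟨w, mem_inter.mpr ⟨h, mem_insert_of_mem (mem_singleton_self _)⟩⟩

theorem zipKey_snd_eq_empty (hK : IsComplex K) (hφ : IdentifiesExactly φ v w)
    (hp : p ∈ edgeStar K v w)
    (hsub : ∀ d ∈ edgeStar K v w, d.image φ ⊂ p.image φ → d.image φ ∈ B)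
    (hσ : σ.image φ ⊂ p.image φ) : (zipKey φ v w B σ).2 = ∅ := by
  by_cases hB : σ.image φ ∈ B
  · rw [zipKey_of_mem hB]
  rw [zipKey_of_notMem hB, ← not_nonempty_iff_eq_empty]
  rintro ⟨z, hz⟩
  obtain ⟨hzσ, hz⟩ := mem_inter.mp hz
  have hmeet : v ∈ σ ∨ w ∈ σ := by
    rcases mem_insert.mp hz with rfl | hz
    exacts [Or.inl hzσ, Or.inr (mem_singleton.mp hz ▸ hzσ)]
  have hdp : insert v (insert w σ) ⊆ p := insert_subset hp.2.1 <|
    insert_subset hp.2.2 (hφ.subset_of_image_subset hσ.subset hp.2.1 hp.2.2)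
  have hd : insert v (insert w σ) ∈ edgeStar K v w :=
    ⟨hK.2.2 p hp.1 _ hdp (insert_nonempty _ _), mem_insert_self _ _,
      mem_insert_of_mem (mem_insert_self _ _)⟩
  rw [← hφ.image_insert_insert hmeet] at hB hσ
  exact hB (hsub _ hd hσ)

theorem ZipsOnto.zipStage_insert {α : Type u} [PartialOrder α]
    (h : ZipsOnto α (zipStage K φ v w B)) (hK : IsComplex K) (hφ : IdentifiesExactly φ v w)
    (hvw : v ≠ w) (hp : p ∈ edgeStar K v w) (hmax : ∀ τ ∈ B, ¬ p.image φ ⊆ τ)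
    (hsub : ∀ d ∈ edgeStar K v w, d.image φ ⊂ p.image φ → d.image φ ∈ B) :
    ZipsOnto α (zipStage K φ v w (insert (p.image φ) B)) := by
  have hpB : p.image φ ∉ B := fun h => hmax _ h subset_rfl
  have hkey {σ m : Finset V} (hσK : σ ∈ K) (hσp : σ.image φ = p.image φ)
      (hm : σ ∩ {v, w} = m) : (p.image φ, m) ∈ zipStage K φ v w B :=
    ⟨σ, hσK, by rw [zipKey_of_notMem (hσp ▸ hpB), hσp, hm]⟩
  obtain ⟨hpK, hvp, hwp⟩ := hp
  have hvq : v ∈ p.erase w := mem_erase.mpr ⟨hvw, hvp⟩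
  have hwr : w ∈ p.erase v := mem_erase.mpr ⟨hvw.symm, hwp⟩
  rw [← image_collapse_zipStage]
  refine h.trans_isElementaryZipping (isElementaryZipping_collapse hvw (hkey hpK rfl ?_)
    (hkey (hK.2.2 p hpK _ (erase_subset _ _) ⟨v, hvq⟩) ?_ ?_)
    (hkey (hK.2.2 p hpK _ (erase_subset _ _) ⟨w, hwr⟩) ?_ ?_) ?_ ?_ ?_)
  · exact inter_eq_right.mpr (insert_subset hvp (singleton_subset_iff.mpr hwp))
  · rw [← hφ.image_insert_insert (Or.inl hvq), insert_erase hwp, insert_eq_of_mem hvp]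
  · ext x
    simp only [mem_inter, mem_erase, mem_insert, mem_singleton]
    grind
  · rw [← hφ.image_insert_insert (Or.inr hwr), insert_comm, insert_erase hvp,
      insert_eq_of_mem hwp]
  · ext x
    simp only [mem_inter, mem_erase, mem_insert, mem_singleton]
    grind
  · rintro _ ⟨σ, -, rfl⟩
    exact zipKey_snd_subset
  · rintro _ ⟨σ, -, rfl⟩ hσ
    exact zipKey_snd_eq_empty hK hφ ⟨hpK, hvp, hwp⟩ hsub hσ
  · rintro _ ⟨σ, -, rfl⟩ hσ
    exact zipKey_snd_nonempty hφ hvp hmax hσ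

theorem zipsOnto_zipStage (hK : IsComplex K) (hφ : IdentifiesExactly φ v w) (hvw : v ≠ w)
    (B : Finset (Finset W)) (hB : IsLowerStarImage K φ v w B) :
    ZipsOnto K (zipStage K φ v w B) := by
  induction B using Finset.induction_on_max_value (f := card) (ι := Finset W) (α := ℕ) with
  | empty => exact .of_orderIso (orderIsoZipStageEmpty hφ)
  | insert t B ht hcard ih =>
    obtain ⟨p, hp, rfl⟩ := hB.exists_preimage t (mem_insert_self t B)
    have hmax : ∀ τ ∈ B, ¬ p.image φ ⊆ τ := fun τ hτ hpτ =>
      ht (eq_of_subset_of_card_le hpτ (hcard τ hτ) ▸ hτ)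
    refine (ih (hB.of_insert hmax)).zipStage_insert hK hφ hvw hp hmax fun d hd hdp => ?_
    exact (mem_insert.mp (hB.mem_of_subset d hd _ (mem_insert_self _ _) hdp.subset)).resolve_left
      hdp.ne

theorem mem_of_image_subset_of_insert_notMem (hK : IsComplex K) (hφ : IdentifiesExactly φ v w)
    (hlink : EdgeLinkCondition K v w) (hσ : σ ∈ K) (hσ' : σ' ∈ K)
    (hsub : σ.image φ ⊆ σ'.image φ) (hv : v ∈ σ) (hw : insert w σ ∉ K) : v ∈ σ' := by
  by_contra hv'
  have hwσ : w ∉ σ := fun h => hw (by rwa [insert_eq_of_mem h])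
  have hw' : w ∈ σ' := (hφ.mem_or_mem_of_map_mem (hsub (mem_image_of_mem φ hv))).resolve_left hv'
  have hρ : insert w (σ.erase v) ⊆ σ' := insert_subset hw' fun x hx =>
    hφ.mem_of_map_mem (ne_of_mem_erase hx) (fun h => hwσ (h ▸ mem_of_mem_erase hx))
      (hsub (mem_image_of_mem φ (mem_of_mem_erase hx)))
  have := hlink (σ.erase v) (by rwa [insert_erase hv]) (hK.2.2 σ' hσ' _ hρ (insert_nonempty _ _))
  rw [insert_comm, insert_erase hv] at this
  exact hw this

theorem zipKey_snd_subset_of_image_subset (hK : IsComplex K) (hφ : IdentifiesExactly φ v w)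
    (hlink : EdgeLinkCondition K v w) (hB : ∀ τ, τ ∈ B ↔ ∃ d ∈ edgeStar K v w, d.image φ = τ)
    (hσ : σ ∈ K) (hσ' : σ' ∈ K) (hsub : σ.image φ ⊆ σ'.image φ) :
    (zipKey φ v w B σ).2 ⊆ (zipKey φ v w B σ').2 := by
  by_cases hσB : σ.image φ ∈ B
  · rw [zipKey_of_mem hσB]
    exact empty_subset _
  rw [zipKey_of_notMem hσB]
  intro z hz
  obtain ⟨hzσ, hz⟩ := mem_inter.mp hz
  have hmeet : v ∈ σ ∨ w ∈ σ := by
    rcases mem_insert.mp hz with rfl | hz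
    exacts [Or.inl hzσ, Or.inr (mem_singleton.mp hz ▸ hzσ)]
  have hnot : insert v (insert w σ) ∉ K := fun h =>
    hσB ((hB _).mpr ⟨_, ⟨h, mem_insert_self _ _, mem_insert_of_mem (mem_insert_self _ _)⟩,
      hφ.image_insert_insert hmeet⟩)
  have hσ'B : σ'.image φ ∉ B := by
    rw [hB]
    rintro ⟨d, hd, hdσ'⟩
    exact hnot (hK.2.2 d hd.1 _ (insert_subset hd.2.1 <| insert_subset hd.2.2 <|
      hφ.subset_of_image_subset (hdσ' ▸ hsub) hd.2.1 hd.2.2) (insert_nonempty _ _))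
  rw [zipKey_of_notMem hσ'B]
  refine mem_inter.mpr ⟨?_, hz⟩
  rcases mem_insert.mp hz with rfl | hz
  · refine mem_of_image_subset_of_insert_notMem hK hφ hlink hσ hσ' hsub hzσ fun h => hnot ?_
    rwa [insert_comm, insert_eq_of_mem hzσ]
  · rw [mem_singleton.mp hz] at hzσ ⊢
    refine mem_of_image_subset_of_insert_notMem hK hφ.symm hlink.symm hσ hσ' hsub hzσ
      fun h => hnot ?_
    rwa [insert_eq_of_mem hzσ]

noncomputable def zipStageOrderIso {L : Set (Finset W)} (hK : IsComplex K)
    (hφ : IdentifiesExactly φ v w) (hlink : EdgeLinkCondition K v w)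
    (hB : ∀ τ, τ ∈ B ↔ ∃ d ∈ edgeStar K v w, d.image φ = τ)
    (hL : L = (fun σ => σ.image φ) '' K) : zipStage K φ v w B ≃o L :=
  OrderIso.ofSurjective
    (OrderEmbedding.ofMapLEIff
      (fun x => ⟨x.1.1, by obtain ⟨σ, hσ, hx⟩ := x.2; exact hL ▸ ⟨σ, hσ, congrArg Prod.fst hx⟩⟩)
      (by
        rintro ⟨_, σ, hσ, rfl⟩ ⟨_, σ', hσ', rfl⟩
        exact ⟨fun h => ⟨h, zipKey_snd_subset_of_image_subset hK hφ hlink hB hσ hσ' h⟩,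
          fun h => h.1⟩))
    (by
      rintro ⟨τ, hτ⟩
      obtain ⟨σ, hσ, rfl⟩ := hL ▸ hτ
      exact ⟨⟨zipKey φ v w B σ, σ, hσ, rfl⟩, rfl⟩)

end Stages

theorem zipsOnto_of_isElemEdgeZip {V W : Type u} {K : Set (Finset V)} {L : Set (Finset W)}
    {φ : V → W} {v w : V} (hz : IsElemEdgeZip K L φ v w) : ZipsOnto K L := by
  classical
  obtain ⟨hK, -, hvw, hφv, hφ, hpair, -, hL, hlink⟩ := hz
  have hφ' : IdentifiesExactly φ v w := ⟨hφv, hφ⟩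
  have hfin : ((fun σ => σ.image φ) '' edgeStar K v w).Finite :=
    (hK.1.subset fun σ hσ => hσ.1).image _
  have hB (τ : Finset W) : τ ∈ hfin.toFinset ↔ ∃ d ∈ edgeStar K v w, d.image φ = τ :=
    hfin.mem_toFinset
  have hB' : IsLowerStarImage K φ v w hfin.toFinset :=
    ⟨fun τ hτ => (hB τ).mp hτ, fun p hp _ _ _ => (hB _).mpr ⟨p, hp, rfl⟩⟩
  exact (zipsOnto_zipStage hK hφ' hvw _ hB').trans_orderIso
    (zipStageOrderIso hK hφ' (edgeLinkCondition_of_link hK hpair hlink) hB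
      (by rw [hL, fimage_eq_image]))

theorem facePoset_zips_of_edgeZips_general {V W : Type u} (K : Set (Finset V))
    (L : Set (Finset W)) (h : EdgeZips V K W L) :
    ZipsOnto (↥K) (↥L) := by
  induction h with
  | refl K => exact .of_orderIso (OrderIso.refl _)
  | step _ _ _ _ hstep ih => exact ih.trans (zipsOnto_of_isElemEdgeZip hstep)

/-- If a finite abstract simplicial complex `K` edge-zips onto `L`, then the face
poset of `K` (simplices ordered by inclusion) zips onto the face poset of `L`. -/
theorem facePoset_zips_of_edgeZips {V W : Type u} (K : Set (Finset V))
    (L : Set (Finset W)) (hK : IsComplex K) (hL : IsComplex L)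
    (h : EdgeZips V K W L) :
    ZipsOnto (↥K) (↥L) :=
  facePoset_zips_of_edgeZips_general K L h
end
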